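/- arXiv:1704.03406 — 8 statements merged into one kernel-verified Lean document; each statement's English description precedes it below -/
import Mathlib

section
/- Let S be a random variable that is strictly positive almost surely and let α ∈ [0,1] be such that E[S^α], E[S^{1+α}], E[S^{1+2α}], E[|log S|·S^α], E[|log S|·S^{1+α}] and E[|log S|·S^{1+2α}] are all finite. Then E[log(S)·S^{1+2α}]·E[S^α]·E[S^{1+α}] ≥ E[S^{1+α}]·E[S^{1+2α}]·E[log(S)·S^α]. -/
/-!
With weight `w = S^α`, the functions `log S` and `S^(1+α)` are both increasing in `S`, so
Chebyshev's integral inequality for the finite measure `w · μ` gives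
`E[S^(1+2α)] · E[log S · S^α] ≤ E[log S · S^(1+2α)] · E[S^α]`; multiplying by `E[S^(1+α)] ≥ 0`
yields the claim. Chebyshev's inequality itself comes from integrating the nonnegative function
`(f x - f y) (g x - g y) w x w y` over `μ ⊗ μ`.
-/

open MeasureTheory Real

section Chebyshev

variable {Ω : Type*} [MeasurableSpace Ω] {μ : Measure Ω}

theorem ae_prod_fst_and_snd {Ω' : Type*} [MeasurableSpace Ω'] {ν : Measure Ω'}
    {p : Ω → Prop} {q : Ω' → Prop} (hp : ∀ᵐ x ∂μ, p x) (hq : ∀ᵐ y ∂ν, q y) :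
    ∀ᵐ z ∂(μ.prod ν), p z.1 ∧ q z.2 :=
  (Measure.quasiMeasurePreserving_fst.ae hp).and (Measure.quasiMeasurePreserving_snd.ae hq)

theorem integral_mul_integral_le_of_similarly_ordered [SFinite μ] {f g w : Ω → ℝ}
    (h_ord : ∀ᵐ z ∂(μ.prod μ), 0 ≤ (f z.1 - f z.2) * (g z.1 - g z.2))
    (hw : ∀ᵐ x ∂μ, 0 ≤ w x) (hw_int : Integrable w μ)
    (hfw : Integrable (fun x => f x * w x) μ) (hgw : Integrable (fun x => g x * w x) μ)
    (hfgw : Integrable (fun x => f x * g x * w x) μ) :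
    (∫ x, f x * w x ∂μ) * (∫ x, g x * w x ∂μ) ≤
      (∫ x, f x * g x * w x ∂μ) * (∫ x, w x ∂μ) := by
  have h_nonneg : 0 ≤ ∫ z, (f z.1 - f z.2) * (g z.1 - g z.2) * (w z.1 * w z.2) ∂(μ.prod μ) := by
    refine integral_nonneg_of_ae ?_
    filter_upwards [h_ord, ae_prod_fst_and_snd hw hw] with z hz hwz
    exact mul_nonneg hz (mul_nonneg hwz.1 hwz.2)
  have h_expand : (fun z : Ω × Ω => (f z.1 - f z.2) * (g z.1 - g z.2) * (w z.1 * w z.2)) =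
      fun z => (f z.1 * g z.1 * w z.1 * w z.2 - f z.1 * w z.1 * (g z.2 * w z.2)) +
        (w z.1 * (f z.2 * g z.2 * w z.2) - g z.1 * w z.1 * (f z.2 * w z.2)) := by
    ext z; ring
  rw [h_expand, integral_add ((hfgw.mul_prod hw_int).sub' (hfw.mul_prod hgw))
      ((hw_int.mul_prod hfgw).sub' (hgw.mul_prod hfw)),
    integral_sub (hfgw.mul_prod hw_int) (hfw.mul_prod hgw),
    integral_sub (hw_int.mul_prod hfgw) (hgw.mul_prod hfw),
    integral_prod_mul (fun x => f x * g x * w x) w,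
    integral_prod_mul (fun x => f x * w x) (fun x => g x * w x),
    integral_prod_mul w (fun x => f x * g x * w x),
    integral_prod_mul (fun x => g x * w x) (fun x => f x * w x)] at h_nonneg
  linarith

end Chebyshev

section LogMoments

variable {Ω : Type*} [MeasurableSpace Ω] {μ : Measure Ω} {S : Ω → ℝ}

theorem aemeasurable_of_aemeasurable_rpow {p : ℝ} (hp : p ≠ 0) (hS : ∀ᵐ ω ∂μ, 0 ≤ S ω)
    (h : AEMeasurable (fun ω => S ω ^ p) μ) : AEMeasurable S μ :=
  (h.pow_const p⁻¹).congr <| by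
    filter_upwards [hS] with ω hω using rpow_rpow_inv hω hp

theorem integrable_log_mul_rpow {e : ℝ} (hS : AEMeasurable S μ) (hSpos : ∀ᵐ ω ∂μ, 0 < S ω)
    (h : Integrable (fun ω => |log (S ω)| * S ω ^ e) μ) :
    Integrable (fun ω => log (S ω) * S ω ^ e) μ := by
  refine h.mono' (hS.log.mul (hS.pow_const e)).aestronglyMeasurable ?_
  filter_upwards [hSpos] with ω hω
  rw [norm_mul, norm_eq_abs, norm_of_nonneg (rpow_nonneg hω.le e)]

theorem integral_rpow_mul_integral_log_mul_rpow_le [SFinite μ] {a c : ℝ} (hac : a ≤ c)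
    (hS : AEMeasurable S μ) (hSpos : ∀ᵐ ω ∂μ, 0 < S ω)
    (ha : Integrable (fun ω => S ω ^ a) μ) (hc : Integrable (fun ω => S ω ^ c) μ)
    (hla : Integrable (fun ω => |log (S ω)| * S ω ^ a) μ)
    (hlc : Integrable (fun ω => |log (S ω)| * S ω ^ c) μ) :
    (∫ ω, S ω ^ c ∂μ) * (∫ ω, log (S ω) * S ω ^ a ∂μ) ≤
      (∫ ω, log (S ω) * S ω ^ c ∂μ) * (∫ ω, S ω ^ a ∂μ) := by
  -- Chebyshev with `f = log S`, `g = S^(c-a)` and weight `w = S^a`.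
  have h_split : (fun ω => S ω ^ (c - a) * S ω ^ a) =ᵐ[μ] fun ω => S ω ^ c := by
    filter_upwards [hSpos] with ω hω
    rw [← rpow_add hω, sub_add_cancel]
  have h_split_log : (fun ω => log (S ω) * S ω ^ (c - a) * S ω ^ a) =ᵐ[μ]
      fun ω => log (S ω) * S ω ^ c := by
    filter_upwards [h_split] with ω hω
    rw [mul_assoc, hω]
  have h_ord : ∀ᵐ z ∂(μ.prod μ),
      0 ≤ (log (S z.1) - log (S z.2)) * (S z.1 ^ (c - a) - S z.2 ^ (c - a)) := by
    filter_upwards [ae_prod_fst_and_snd hSpos hSpos] with z ⟨h₁, h₂⟩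
    have hca : 0 ≤ c - a := sub_nonneg.2 hac
    rcases le_total (S z.1) (S z.2) with h | h
    · exact mul_nonneg_of_nonpos_of_nonpos (sub_nonpos.2 (log_le_log h₁ h))
        (sub_nonpos.2 (rpow_le_rpow h₁.le h hca))
    · exact mul_nonneg (sub_nonneg.2 (log_le_log h₂ h)) (sub_nonneg.2 (rpow_le_rpow h₂.le h hca))
  have hlog_a := integrable_log_mul_rpow hS hSpos hla
  have hlog_c := integrable_log_mul_rpow hS hSpos hlc
  have key := integral_mul_integral_le_of_similarly_ordered h_ord
    (by filter_upwards [hSpos] with ω hω using rpow_nonneg hω.le a) ha hlog_a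
    (hc.congr h_split.symm) (hlog_c.congr h_split_log.symm)
  rw [integral_congr_ae h_split, integral_congr_ae h_split_log] at key
  linarith

end LogMoments

theorem log_moment_inequality_first_general
    {Ω : Type*} [MeasurableSpace Ω] (μ : Measure Ω) [IsProbabilityMeasure μ]
    (S : Ω → ℝ) (hSpos : ∀ᵐ ω ∂μ, 0 < S ω)
    (α : ℝ) (hα0 : 0 ≤ α)
    (hm1 : Integrable (fun ω => S ω ^ α) μ)
    (hm3 : Integrable (fun ω => S ω ^ (1 + 2 * α)) μ)
    (hl1 : Integrable (fun ω => |Real.log (S ω)| * S ω ^ α) μ)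
    (hl3 : Integrable (fun ω => |Real.log (S ω)| * S ω ^ (1 + 2 * α)) μ) :
    (∫ ω, S ω ^ (1 + α) ∂μ) * (∫ ω, S ω ^ (1 + 2 * α) ∂μ) *
        (∫ ω, Real.log (S ω) * S ω ^ α ∂μ) ≤
      (∫ ω, Real.log (S ω) * S ω ^ (1 + 2 * α) ∂μ) * (∫ ω, S ω ^ α ∂μ) *
        (∫ ω, S ω ^ (1 + α) ∂μ) := by
  have hS : AEMeasurable S μ :=
    aemeasurable_of_aemeasurable_rpow (by linarith) (hSpos.mono fun _ h => h.le) hm3.aemeasurable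
  have key := integral_rpow_mul_integral_log_mul_rpow_le (by linarith) hS hSpos hm1 hm3 hl1 hl3
  have hm2_nonneg : 0 ≤ ∫ ω, S ω ^ (1 + α) ∂μ :=
    integral_nonneg_of_ae (hSpos.mono fun ω h => rpow_nonneg h.le _)
  linarith [mul_le_mul_of_nonneg_left key hm2_nonneg]

/-- For `S > 0` a.s. and `α ∈ [0,1]`, with all relevant expectations finite,
`E[log S · S^(1+2α)] · E[S^α] · E[S^(1+α)] ≥ E[S^(1+α)] · E[S^(1+2α)] · E[log S · S^α]`. -/
theorem log_moment_inequality_first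
    {Ω : Type*} [MeasurableSpace Ω] (μ : Measure Ω) [IsProbabilityMeasure μ]
    (S : Ω → ℝ) (hSpos : ∀ᵐ ω ∂μ, 0 < S ω)
    (α : ℝ) (hα0 : 0 ≤ α) (hα1 : α ≤ 1)
    (hm1 : Integrable (fun ω => S ω ^ α) μ)
    (hm2 : Integrable (fun ω => S ω ^ (1 + α)) μ)
    (hm3 : Integrable (fun ω => S ω ^ (1 + 2 * α)) μ)
    (hl1 : Integrable (fun ω => |Real.log (S ω)| * S ω ^ α) μ)
    (hl2 : Integrable (fun ω => |Real.log (S ω)| * S ω ^ (1 + α)) μ)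
    (hl3 : Integrable (fun ω => |Real.log (S ω)| * S ω ^ (1 + 2 * α)) μ) :
    (∫ ω, S ω ^ (1 + α) ∂μ) * (∫ ω, S ω ^ (1 + 2 * α) ∂μ) *
        (∫ ω, Real.log (S ω) * S ω ^ α ∂μ) ≤
      (∫ ω, Real.log (S ω) * S ω ^ (1 + 2 * α) ∂μ) * (∫ ω, S ω ^ α ∂μ) *
        (∫ ω, S ω ^ (1 + α) ∂μ) :=
  log_moment_inequality_first_general μ S hSpos α hα0 hm1 hm3 hl1 hl3
end

section
/- Let S be a random variable that is strictly positive almost surely, with E[S^3] < ∞ and E[|log S|·(1 + S^3)] < ∞. Then the function f(α) := E[S^{1+2α}]/(E[S^α]·E[S^{1+α}]) is nondecreasing on the interval [0,1]: for all 0 ≤ α ≤ β ≤ 1, f(α) ≤ f(β). -/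
/-!
Write `M p = E[S^p]`. Under the weight `S^u` the functions `S^(s-u)` and `S^(v-u)` are both
increasing in `S`, hence positively correlated (Chebyshev's inequality); this reads
`M s · M v ≤ M u · M t` whenever `u ≤ s`, `u ≤ v` and `s + v = u + t`, i.e. `p ↦ M p` is
log-convex. The two instances `M β · M(1+α+β) ≤ M α · M(1+2β)` and
`M(1+β) · M(1+2α) ≤ M(1+α) · M(1+α+β)` combine to `f α ≤ f β`.
-/

open MeasureTheory Real

theorem Real.rpow_sub_rpow_mul_rpow_sub_rpow_nonneg {a b p q : ℝ} (ha : 0 ≤ a) (hb : 0 ≤ b)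
    (hp : 0 ≤ p) (hq : 0 ≤ q) : 0 ≤ (a ^ p - b ^ p) * (a ^ q - b ^ q) := by
  rcases le_total a b with h | h
  · exact mul_nonneg_of_nonpos_of_nonpos (sub_nonpos.2 (rpow_le_rpow ha h hp))
      (sub_nonpos.2 (rpow_le_rpow ha h hq))
  · exact mul_nonneg (sub_nonneg.2 (rpow_le_rpow hb h hp)) (sub_nonneg.2 (rpow_le_rpow hb h hq))

section Integral

variable {α : Type*} [MeasurableSpace α] {μ : Measure α}

theorem integral_pos_of_ae_pos [NeZero μ] {f : α → ℝ} (hf : ∀ᵐ x ∂μ, 0 < f x)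
    (hfi : Integrable f μ) : 0 < ∫ x, f x ∂μ := by
  have hf0 : 0 ≤ᵐ[μ] f := hf.mono fun _ h => h.le
  refine (integral_nonneg_of_ae hf0).lt_of_ne' fun h0 => ?_
  obtain ⟨x, hx, hx0⟩ := (hf.and ((integral_eq_zero_iff_of_nonneg_ae hf0 hfi).1 h0)).exists
  exact hx.ne' hx0

/-- Weighted Chebyshev inequality: integrate `w x w y (f x - f y) (g x - g y) ≥ 0` over `μ × μ`. -/
theorem integral_mul_integral_le_of_ae_monovary [SFinite μ] {w f g : α → ℝ}
    (hw : 0 ≤ᵐ[μ] w) (hfg : ∀ᵐ z ∂μ.prod μ, 0 ≤ (f z.1 - f z.2) * (g z.1 - g z.2))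
    (hwi : Integrable w μ) (hwf : Integrable (fun x => w x * f x) μ)
    (hwg : Integrable (fun x => w x * g x) μ) (hwfg : Integrable (fun x => w x * f x * g x) μ) :
    (∫ x, w x * f x ∂μ) * (∫ x, w x * g x ∂μ) ≤ (∫ x, w x ∂μ) * ∫ x, w x * f x * g x ∂μ := by
  have hww : ∀ᵐ z ∂μ.prod μ, 0 ≤ w z.1 * w z.2 := by
    filter_upwards [Measure.quasiMeasurePreserving_fst.ae hw,
      Measure.quasiMeasurePreserving_snd.ae hw] with z h1 h2
    exact mul_nonneg h1 h2
  have key : 0 ≤ ∫ z, w z.1 * w z.2 * ((f z.1 - f z.2) * (g z.1 - g z.2)) ∂μ.prod μ :=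
    integral_nonneg_of_ae (by filter_upwards [hww, hfg] with z h1 h2 using mul_nonneg h1 h2)
  have expand : (fun z : α × α => w z.1 * w z.2 * ((f z.1 - f z.2) * (g z.1 - g z.2))) =
      fun z => (w z.1 * f z.1 * g z.1) * w z.2 - (w z.1 * f z.1) * (w z.2 * g z.2)
        - (w z.1 * g z.1) * (w z.2 * f z.2) + w z.1 * (w z.2 * f z.2 * g z.2) := by
    ext z; ring
  have i₁ := hwfg.mul_prod hwi
  have i₂ := hwf.mul_prod hwg
  have i₃ := hwg.mul_prod hwf
  rw [expand, integral_add ?_ (hwi.mul_prod hwfg), integral_sub ?_ i₃, integral_sub i₁ i₂] at key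
  · rw [integral_prod_mul (fun x => w x * f x * g x) w,
      integral_prod_mul (fun x => w x * f x) (fun x => w x * g x),
      integral_prod_mul (fun x => w x * g x) (fun x => w x * f x),
      integral_prod_mul w (fun x => w x * f x * g x)] at key
    linarith
  · exact i₁.sub i₂
  · exact (i₁.sub i₂).sub i₃

end Integral

section Moments

variable {Ω : Type*} [MeasurableSpace Ω] {μ : Measure Ω} {S : Ω → ℝ} {r : ℝ}

theorem aemeasurable_of_integrable_rpow (hS : ∀ᵐ ω ∂μ, 0 ≤ S ω) (hr : r ≠ 0)
    (hSr : Integrable (fun ω => S ω ^ r) μ) : AEMeasurable S μ := by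
  refine (hSr.aemeasurable.pow_const r⁻¹).congr ?_
  filter_upwards [hS] with ω hω
  rw [← rpow_mul hω, mul_inv_cancel₀ hr, rpow_one]

theorem integrable_rpow_of_le [IsFiniteMeasure μ] (hS : ∀ᵐ ω ∂μ, 0 ≤ S ω)
    (hSm : AEMeasurable S μ) (hSr : Integrable (fun ω => S ω ^ r) μ) {p : ℝ} (hp : 0 ≤ p)
    (hpr : p ≤ r) : Integrable (fun ω => S ω ^ p) μ := by
  refine ((integrable_const 1).add hSr).mono' (hSm.pow_const p).aestronglyMeasurable ?_
  filter_upwards [hS] with ω hω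
  rw [norm_of_nonneg (rpow_nonneg hω p), Pi.add_apply]
  rcases le_total (S ω) 1 with h | h
  · linarith [rpow_le_one hω h hp, rpow_nonneg hω r]
  · linarith [rpow_le_rpow_of_exponent_le h hpr]

theorem integral_rpow_mul_integral_rpow_le [IsFiniteMeasure μ] (hS : ∀ᵐ ω ∂μ, 0 ≤ S ω)
    (hSm : AEMeasurable S μ) (hSr : Integrable (fun ω => S ω ^ r) μ) {u s v t : ℝ}
    (hu : 0 ≤ u) (hus : u ≤ s) (huv : u ≤ v) (hsum : s + v = u + t) (htr : t ≤ r) :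
    (∫ ω, S ω ^ s ∂μ) * (∫ ω, S ω ^ v ∂μ) ≤ (∫ ω, S ω ^ u ∂μ) * ∫ ω, S ω ^ t ∂μ := by
  have hint {p : ℝ} (hp : 0 ≤ p) (hpr : p ≤ r) := integrable_rpow_of_le hS hSm hSr hp hpr
  have hs : (fun ω => S ω ^ u * S ω ^ (s - u)) =ᵐ[μ] fun ω => S ω ^ s := by
    filter_upwards [hS] with ω hω
    rw [← rpow_add_of_nonneg hω hu (by linarith), add_sub_cancel]
  have hv : (fun ω => S ω ^ u * S ω ^ (v - u)) =ᵐ[μ] fun ω => S ω ^ v := by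
    filter_upwards [hS] with ω hω
    rw [← rpow_add_of_nonneg hω hu (by linarith), add_sub_cancel]
  have ht : (fun ω => S ω ^ u * S ω ^ (s - u) * S ω ^ (v - u)) =ᵐ[μ] fun ω => S ω ^ t := by
    filter_upwards [hS] with ω hω
    rw [← rpow_add_of_nonneg hω hu (by linarith),
      ← rpow_add_of_nonneg hω (by linarith) (by linarith)]
    congr 1
    linarith
  have hmono : ∀ᵐ z ∂μ.prod μ,
      0 ≤ (S z.1 ^ (s - u) - S z.2 ^ (s - u)) * (S z.1 ^ (v - u) - S z.2 ^ (v - u)) := by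
    filter_upwards [Measure.quasiMeasurePreserving_fst.ae hS,
      Measure.quasiMeasurePreserving_snd.ae hS] with z h1 h2
    exact rpow_sub_rpow_mul_rpow_sub_rpow_nonneg h1 h2 (by linarith) (by linarith)
  have := integral_mul_integral_le_of_ae_monovary (hS.mono fun _ h => rpow_nonneg h u) hmono
    (hint hu (by linarith)) ((hint (by linarith) (by linarith)).congr hs.symm)
    ((hint (by linarith) (by linarith)).congr hv.symm) ((hint (by linarith) htr).congr ht.symm)
  rwa [integral_congr_ae hs, integral_congr_ae hv, integral_congr_ae ht] at this

end Moments

theorem drift_coefficient_monotone_general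
    {Ω : Type*} [MeasurableSpace Ω] (μ : Measure Ω) [IsProbabilityMeasure μ]
    (S : Ω → ℝ) (hSpos : ∀ᵐ ω ∂μ, 0 < S ω)
    (hS3 : Integrable (fun ω => S ω ^ (3 : ℝ)) μ)
    (f : ℝ → ℝ)
    (hf : ∀ α, f α = (∫ ω, S ω ^ (1 + 2 * α) ∂μ) /
        ((∫ ω, S ω ^ α ∂μ) * (∫ ω, S ω ^ (1 + α) ∂μ))) :
    ∀ α β : ℝ, 0 ≤ α → α ≤ β → β ≤ 1 → f α ≤ f β := by
  intro α β hα hαβ hβ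
  have hS : ∀ᵐ ω ∂μ, 0 ≤ S ω := hSpos.mono fun _ h => h.le
  have hSm := aemeasurable_of_integrable_rpow hS three_ne_zero hS3
  have hM {p : ℝ} (hp : 0 ≤ p) (hp3 : p ≤ 3) : 0 < ∫ ω, S ω ^ p ∂μ :=
    integral_pos_of_ae_pos (hSpos.mono fun _ h => rpow_pos_of_pos h p)
      (integrable_rpow_of_le hS hSm hS3 hp hp3)
  have h₁ := integral_rpow_mul_integral_rpow_le hS hSm hS3 (u := α) (s := β) (v := 1 + α + β)
    (t := 1 + 2 * β) hα hαβ (by linarith) (by ring) (by linarith)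
  have h₂ := integral_rpow_mul_integral_rpow_le hS hSm hS3 (u := 1 + α) (s := 1 + β)
    (v := 1 + 2 * α) (t := 1 + α + β) (by linarith) (by linarith) (by linarith) (by ring)
    (by linarith)
  rw [hf, hf, div_le_div_iff₀ (mul_pos (hM hα (by linarith)) (hM (by linarith) (by linarith)))
    (mul_pos (hM (by linarith) (by linarith)) (hM (by linarith) (by linarith)))]
  linarith [mul_le_mul_of_nonneg_left h₂ (hM (p := β) (by linarith) (by linarith)).le,
    mul_le_mul_of_nonneg_left h₁ (hM (p := 1 + α) (by linarith) (by linarith)).le]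

/-- The coefficient `f(α) = E[S^(1+2α)]/(E[S^α]·E[S^(1+α)])` of the depletion-of-points
quadratic drift is nondecreasing in `α` on `[0,1]`, for `S > 0` a.s. with
`E[S^3] < ∞` and `E[|log S|·(1+S^3)] < ∞`. -/
theorem drift_coefficient_monotone
    {Ω : Type*} [MeasurableSpace Ω] (μ : Measure Ω) [IsProbabilityMeasure μ]
    (S : Ω → ℝ) (hSpos : ∀ᵐ ω ∂μ, 0 < S ω)
    (hS3 : Integrable (fun ω => S ω ^ (3 : ℝ)) μ)
    (hlog : Integrable (fun ω => |Real.log (S ω)| * (1 + S ω ^ (3 : ℝ))) μ)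
    (f : ℝ → ℝ)
    (hf : ∀ α, f α = (∫ ω, S ω ^ (1 + 2 * α) ∂μ) /
        ((∫ ω, S ω ^ α ∂μ) * (∫ ω, S ω ^ (1 + α) ∂μ))) :
    ∀ α β : ℝ, 0 ≤ α → α ≤ β → β ≤ 1 → f α ≤ f β :=
  drift_coefficient_monotone_general μ S hSpos hS3 f hf
end

section
/- Let (S_j)_{j≥1} be a sequence of independent, identically distributed, strictly positive random variables with E[S_1^{2+α}] < ∞ for some α ∈ (0,1). Then for every constant c > 0, sup over all subsets X ⊆ {1,…,n} with |X| ≤ c·n^{2/3} of (1/n)·Σ_{j∈X} S_j^α converges to 0 in probability as n → ∞; that is, for every ε > 0, P( max_{X⊆[n], |X|≤c n^{2/3}} (1/n)Σ_{j∈X} S_j^α > ε ) → 0. -/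
/-!
Split `S^α` at a level `t`: `x ^ α ≤ t + x ^ (2 + α) / t ^ (2 / α)`. Summing over a set `X`
of at most `k` indices bounds `Σ_{j ∈ X} S_j^α` by `k t + T / t ^ (2 / α)`, where
`T = Σ_{j ≤ n} S_j^(2+α)` no longer depends on `X`. With `t = n^(1/6)` the first term is
`o(n)`, and Markov's inequality for `T`, whose mean is `n E[S^(2+α)]`, bounds the probability
of the event by `2 E[S^(2+α)] / (ε t ^ (2 / α)) → 0`.
-/

open MeasureTheory Filter ProbabilityTheory Finset Topology

namespace Real

theorem rpow_le_add_rpow_add_div_rpow {α β t x : ℝ} (hα : 0 < α) (hβ : 0 ≤ β) (ht : 0 < t)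
    (hx : 0 ≤ x) : x ^ α ≤ t + x ^ (β + α) / t ^ (β / α) := by
  rcases le_or_gt (x ^ α) t with hxt | htx
  · have : 0 ≤ x ^ (β + α) / t ^ (β / α) := by positivity
    linarith
  have hx0 : 0 < x := by
    refine hx.lt_of_ne fun h => ?_
    rw [← h, zero_rpow hα.ne'] at htx
    exact ht.not_gt htx
  have htβ : t ^ (β / α) ≤ x ^ β :=
    calc t ^ (β / α) ≤ (x ^ α) ^ (β / α) := rpow_le_rpow ht.le htx.le (div_nonneg hβ hα.le)
      _ = x ^ β := by rw [← rpow_mul hx, mul_div_cancel₀ _ hα.ne']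
  calc x ^ α = x ^ (β + α) / x ^ β := by
        rw [rpow_add hx0, mul_div_cancel_left₀ _ (rpow_pos_of_pos hx0 β).ne']
    _ ≤ x ^ (β + α) / t ^ (β / α) := by gcongr
    _ ≤ t + x ^ (β + α) / t ^ (β / α) := le_add_of_nonneg_left ht.le

end Real

theorem Finset.sum_rpow_le_card_mul_add_sum_rpow_div {ι : Type*} {X s : Finset ι} (hXs : X ⊆ s)
    {f : ι → ℝ} (hf : ∀ i ∈ s, 0 ≤ f i) {α β t : ℝ} (hα : 0 < α) (hβ : 0 ≤ β) (ht : 0 < t) :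
    ∑ i ∈ X, f i ^ α ≤ #X * t + (∑ i ∈ s, f i ^ (β + α)) / t ^ (β / α) :=
  calc ∑ i ∈ X, f i ^ α ≤ ∑ i ∈ X, (t + f i ^ (β + α) / t ^ (β / α)) :=
        sum_le_sum fun i hi => Real.rpow_le_add_rpow_add_div_rpow hα hβ ht (hf i (hXs hi))
    _ = #X * t + (∑ i ∈ X, f i ^ (β + α)) / t ^ (β / α) := by
        rw [sum_add_distrib, sum_const, nsmul_eq_mul, sum_div]
    _ ≤ #X * t + (∑ i ∈ s, f i ^ (β + α)) / t ^ (β / α) := by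
        gcongr
        exact fun i hi _ => Real.rpow_nonneg (hf i hi) _

theorem MeasureTheory.measure_le_sum_le_of_identDistrib {ι Ω : Type*} [MeasurableSpace Ω]
    {μ : Measure Ω} [IsFiniteMeasure μ] {Y : ι → Ω → ℝ} {Z : Ω → ℝ}
    (hY : ∀ i, IdentDistrib (Y i) Z μ μ) (hZ : Integrable Z μ) (hnn : ∀ i, 0 ≤ᵐ[μ] Y i)
    (s : Finset ι) {b : ℝ} (hb : 0 < b) :
    μ {ω | b ≤ ∑ i ∈ s, Y i ω} ≤ ENNReal.ofReal (#s * (∫ ω, Z ω ∂μ) / b) := by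
  have hYint : ∀ i ∈ s, Integrable (Y i) μ := fun i _ => (hY i).integrable_iff.mpr hZ
  have hsum_nn : 0 ≤ᵐ[μ] fun ω => ∑ i ∈ s, Y i ω := by
    filter_upwards [s.eventually_all.2 fun i _ => hnn i] with ω hω using sum_nonneg hω
  rw [← ofReal_measureReal]
  refine ENNReal.ofReal_le_ofReal ?_
  rw [le_div_iff₀ hb, mul_comm]
  calc b * μ.real {ω | b ≤ ∑ i ∈ s, Y i ω} ≤ ∫ ω, ∑ i ∈ s, Y i ω ∂μ :=
        mul_meas_ge_le_integral_of_nonneg hsum_nn (integrable_finsetSum s hYint) b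
    _ = #s * ∫ ω, Z ω ∂μ := by
        rw [integral_finsetSum s hYint]
        simp [(hY _).integral_eq]

section RandomSums

variable {Ω : Type*} [MeasurableSpace Ω] {μ : Measure Ω} [IsFiniteMeasure μ] {S : ℕ → Ω → ℝ}
  {α β : ℝ}

theorem measure_exists_subset_sum_rpow_gt_le (hident : ∀ i, IdentDistrib (S i) (S 1) μ μ)
    (hpos : ∀ i, ∀ᵐ ω ∂μ, 0 < S i ω) (hα : 0 < α) (hβ : 0 ≤ β)
    (hint : Integrable (fun ω => S 1 ω ^ (β + α)) μ) {n : ℕ} (hn : 0 < n) {k t ε : ℝ}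
    (ht : 0 < t) (hε : 0 < ε) (hkt : k * t / n ≤ ε / 2) :
    μ {ω | ∃ X : Finset ℕ, X ⊆ Icc 1 n ∧ (#X : ℝ) ≤ k ∧ ε < 1 / (n : ℝ) * ∑ j ∈ X, S j ω ^ α} ≤
      ENNReal.ofReal (2 * (∫ ω, S 1 ω ^ (β + α) ∂μ) / (ε * t ^ (β / α))) := by
  have hn' : (0 : ℝ) < n := Nat.cast_pos.2 hn
  set T : Ω → ℝ := fun ω => ∑ j ∈ Icc 1 n, S j ω ^ (β + α)
  set b := ε / 2 * n * t ^ (β / α)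
  have hincl : {ω | ∃ X : Finset ℕ, X ⊆ Icc 1 n ∧ (#X : ℝ) ≤ k ∧
      ε < 1 / (n : ℝ) * ∑ j ∈ X, S j ω ^ α} ≤ᵐ[μ] {ω | b ≤ T ω} := by
    filter_upwards [ae_all_iff.2 hpos] with ω hω ⟨X, hXs, hXk, hεX⟩
    have hsplit := sum_rpow_le_card_mul_add_sum_rpow_div hXs (fun j _ => (hω j).le) hα hβ ht
    have hεT : ε < k * t / n + T ω / (n * t ^ (β / α)) :=
      calc ε < 1 / (n : ℝ) * ∑ j ∈ X, S j ω ^ α := hεX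
        _ ≤ 1 / (n : ℝ) * (k * t + T ω / t ^ (β / α)) := by
          gcongr
          exact hsplit.trans (by gcongr)
        _ = k * t / n + T ω / (n * t ^ (β / α)) := by field_simp
    have hhalf : ε / 2 < T ω / (n * t ^ (β / α)) := by linarith
    rw [lt_div_iff₀ (by positivity), ← mul_assoc] at hhalf
    exact hhalf.le
  have hmeas_rpow : Measurable fun x : ℝ => x ^ (β + α) :=
    (Real.continuous_rpow_const (by positivity)).measurable
  calc _ ≤ μ {ω | b ≤ T ω} := measure_mono_ae hincl
    _ ≤ ENNReal.ofReal (#(Icc 1 n) * (∫ ω, S 1 ω ^ (β + α) ∂μ) / b) :=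
        measure_le_sum_le_of_identDistrib (fun j => (hident j).comp hmeas_rpow) hint
          (fun j => (hpos j).mono fun ω h => Real.rpow_nonneg h.le _) _ (by positivity)
    _ = ENNReal.ofReal (2 * (∫ ω, S 1 ω ^ (β + α) ∂μ) / (ε * t ^ (β / α))) := by
        congr 1
        simp only [Nat.card_Icc, add_tsub_cancel_right, b]
        field_simp

end RandomSums

theorem unif_convergence_random_sums_general
    {Ω : Type*} [MeasurableSpace Ω] (μ : Measure Ω) [IsProbabilityMeasure μ]
    (S : ℕ → Ω → ℝ)
    (hident : ∀ i, IdentDistrib (S i) (S 1) μ μ)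
    (hpos : ∀ i, ∀ᵐ ω ∂μ, 0 < S i ω)
    (α : ℝ) (hα0 : 0 < α)
    (hint : Integrable (fun ω => S 1 ω ^ (2 + α)) μ) :
    ∀ c : ℝ, 0 < c → ∀ ε : ℝ, 0 < ε →
      Tendsto
        (fun n : ℕ =>
          μ {ω | ∃ X : Finset ℕ, X ⊆ Finset.Icc 1 n ∧
              (X.card : ℝ) ≤ c * (n : ℝ) ^ ((2 : ℝ) / 3) ∧
              ε < (1 / (n : ℝ)) * ∑ j ∈ X, S j ω ^ α})
        atTop (nhds 0) := by
  intro c hc ε hε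
  set t : ℕ → ℝ := fun n => (n : ℝ) ^ ((1 : ℝ) / 6)
  have hkt : ∀ᶠ n : ℕ in atTop, c * (n : ℝ) ^ ((2 : ℝ) / 3) * t n / n ≤ ε / 2 := by
    have hlim : Tendsto (fun n : ℕ => c * (n : ℝ) ^ (-(1 / 6 : ℝ))) atTop (𝓝 0) := by
      simpa using ((tendsto_rpow_neg_atTop (by norm_num)).comp
        tendsto_natCast_atTop_atTop).const_mul c
    filter_upwards [hlim.eventually (ge_mem_nhds (half_pos hε)), eventually_gt_atTop 0]
      with n hn hn0
    have hn' : (n : ℝ) ≠ 0 := Nat.cast_ne_zero.2 hn0.ne'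
    rwa [mul_assoc, ← Real.rpow_add (by positivity),
      show (2 : ℝ) / 3 + 1 / 6 = -(1 / 6) + 1 by norm_num, Real.rpow_add_one hn',
      ← mul_assoc, mul_div_cancel_right₀ _ hn']
  have hbound : ∀ᶠ n : ℕ in atTop, μ {ω | ∃ X : Finset ℕ, X ⊆ Finset.Icc 1 n ∧
      (X.card : ℝ) ≤ c * (n : ℝ) ^ ((2 : ℝ) / 3) ∧ ε < (1 / (n : ℝ)) * ∑ j ∈ X, S j ω ^ α} ≤
      ENNReal.ofReal (2 * (∫ ω, S 1 ω ^ (2 + α) ∂μ) / (ε * t n ^ (2 / α))) := by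
    filter_upwards [hkt, eventually_gt_atTop 0] with n hn hn0
    exact measure_exists_subset_sum_rpow_gt_le hident hpos hα0 zero_le_two hint hn0
      (by positivity) hε hn
  have hlim : Tendsto (fun n => ENNReal.ofReal (2 * (∫ ω, S 1 ω ^ (2 + α) ∂μ) /
      (ε * t n ^ (2 / α)))) atTop (𝓝 0) := by
    have ht : Tendsto (fun n => ε * t n ^ (2 / α)) atTop atTop :=
      (((tendsto_rpow_atTop (by positivity)).comp ((tendsto_rpow_atTop (by norm_num)).comp
        tendsto_natCast_atTop_atTop))).const_mul_atTop hε
    simpa [div_eq_mul_inv] using ENNReal.tendsto_ofReal ((tendsto_inv_atTop_zero.comp ht).const_mul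
      (2 * ∫ ω, S 1 ω ^ (2 + α) ∂μ))
  exact tendsto_of_tendsto_of_tendsto_of_le_of_le' tendsto_const_nhds hlim
    (Eventually.of_forall fun _ => zero_le) hbound

/-- Uniform convergence of random sums: for i.i.d. strictly positive `(S_j)` with
`E[S^(2+α)] < ∞` and `α ∈ (0,1)`, the maximum over subsets `X ⊆ [n]` of size at most
`c·n^(2/3)` of `(1/n)·Σ_{j∈X} S_j^α` tends to `0` in probability. -/
theorem unif_convergence_random_sums
    {Ω : Type*} [MeasurableSpace Ω] (μ : Measure Ω) [IsProbabilityMeasure μ]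
    (S : ℕ → Ω → ℝ) (hmeas : ∀ i, Measurable (S i))
    (hindep : iIndepFun S μ)
    (hident : ∀ i, IdentDistrib (S i) (S 1) μ μ)
    (hpos : ∀ i, ∀ᵐ ω ∂μ, 0 < S i ω)
    (α : ℝ) (hα0 : 0 < α) (hα1 : α < 1)
    (hint : Integrable (fun ω => S 1 ω ^ (2 + α)) μ) :
    ∀ c : ℝ, 0 < c → ∀ ε : ℝ, 0 < ε →
      Tendsto
        (fun n : ℕ =>
          μ {ω | ∃ X : Finset ℕ, X ⊆ Finset.Icc 1 n ∧
              (X.card : ℝ) ≤ c * (n : ℝ) ^ ((2 : ℝ) / 3) ∧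
              ε < (1 / (n : ℝ)) * ∑ j ∈ X, S j ω ^ α})
        atTop (nhds 0) :=
  unif_convergence_random_sums_general μ S hident hpos α hα0 hint
end

section
/- Let N, N′: ℕ → ℝ be sequences with N(0) = N′(0) and with dominated increments: N(k) − N(k−1) ≤ N′(k) − N′(k−1) for all k ≥ 1. Define the reflection map φ(X)(k) := X(k) − min(0, min_{0≤j≤k} X(j)). Then φ(N)(k) ≤ φ(N′)(k) for every k ≥ 0. -/
/-!
Let `D = N - N'`. Dominated increments make `D` antitone, and with `N 0 = N' 0` this gives
`D k ≤ D j` for all `j ≤ k` and `D k ≤ 0`. Hence `min 0 (min_{j ≤ k} N' j) + D k` is a lower bound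
for `0` and for every `N j` with `j ≤ k`, i.e. it is at most `min 0 (min_{j ≤ k} N j)`, which is
the claim `φ(N)(k) ≤ φ(N')(k)` rearranged.
-/

variable {α : Type*} [AddCommGroup α] [LinearOrder α] [IsOrderedAddMonoid α]

def reflection (X : ℕ → α) (k : ℕ) : α :=
  X k - min 0 ((Finset.range (k + 1)).inf' Finset.nonempty_range_add_one X)

theorem antitone_sub_of_succ_sub_le {X Y : ℕ → α}
    (h : ∀ k, X (k + 1) - X k ≤ Y (k + 1) - Y k) : Antitone (X - Y) :=
  antitone_nat_of_succ_le fun k => by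
    simpa only [Pi.sub_apply, sub_le_sub_iff, add_comm] using h k

theorem reflection_le_reflection_of_antitone_sub {X Y : ℕ → α}
    (hanti : Antitone (X - Y)) (h0 : X 0 ≤ Y 0) (k : ℕ) :
    reflection X k ≤ reflection Y k := by
  set s := Finset.range (k + 1)
  have hk : X k - Y k ≤ 0 := (hanti (Nat.zero_le k)).trans (sub_nonpos.mpr h0)
  suffices h : min 0 (s.inf' Finset.nonempty_range_add_one Y) + (X k - Y k) ≤
      min 0 (s.inf' Finset.nonempty_range_add_one X) by
    unfold reflection
    rw [sub_le_sub_iff]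
    calc X k + min 0 (s.inf' _ Y) = min 0 (s.inf' _ Y) + (X k - Y k) + Y k := by abel
      _ ≤ min 0 (s.inf' _ X) + Y k := add_le_add_left h _
      _ = Y k + min 0 (s.inf' _ X) := add_comm _ _
  refine le_min (add_nonpos (min_le_left _ _) hk) (Finset.le_inf' _ _ fun j hj => ?_)
  calc min 0 (s.inf' _ Y) + (X k - Y k)
      ≤ Y j + (X j - Y j) :=
        add_le_add ((min_le_right _ _).trans (Finset.inf'_le _ hj))
          (hanti (Nat.lt_succ_iff.mp (Finset.mem_range.mp hj)))
    _ = X j := add_sub_cancel _ _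

/-- Monotonicity of the one-sided reflection map: if `N(0) = N'(0)` and the increments
of `N` are dominated by those of `N'`, then `φ(N)(k) ≤ φ(N')(k)` for all `k`, where
`φ(X)(k) = X(k) - min(0, min_{0≤j≤k} X(j))`. -/
theorem reflection_monotone
    (N N' : ℕ → ℝ) (h0 : N 0 = N' 0)
    (hincr : ∀ k : ℕ, N (k + 1) - N k ≤ N' (k + 1) - N' k) :
    ∀ k : ℕ,
      N k - min 0 ((Finset.range (k + 1)).inf'
          ⟨0, Finset.mem_range.mpr (Nat.succ_pos k)⟩ N) ≤
        N' k - min 0 ((Finset.range (k + 1)).inf'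
          ⟨0, Finset.mem_range.mpr (Nat.succ_pos k)⟩ N') :=
  reflection_le_reflection_of_antitone_sub (antitone_sub_of_succ_sub_le hincr) h0.le
end

section
/- Let E_1, …, E_n be independent random variables, where E_i is exponentially distributed with rate λ_i > 0, let t ≥ 0, and let Π be a Poisson random variable with mean t·(λ_1 + ⋯ + λ_n). Then Σ_{i=1}^n 1{E_i ≤ t} is stochastically dominated by Π: for every k ∈ ℕ, P(Σ_{i=1}^n 1{E_i ≤ t} ≥ k) ≤ P(Π ≥ k). -/
/-!
Induction over the clocks. Clock `i` has rung by time `t` with probability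
`1 - e^{-λ_i t} = P(Po(λ_i t) ≠ 0)`, independently of the others. So if the count of the other
clocks is dominated by `Po(A)`, adding clock `i` gives the mixture "`Po(A)`, shifted by one with
probability `P(Po(λ_i t) ≠ 0)`", and this mixture is dominated by
`Po(λ_i t) ∗ Po(A) = Po(λ_i t + A)` because a nonzero Poisson summand is at least one.
-/

open MeasureTheory ProbabilityTheory
open scoped NNReal ENNReal

section

open Set

theorem MeasureTheory.Measure.le_conv_apply_Ici_succ (ρ ν : Measure ℕ) [SFinite ν] (k : ℕ) :
    ρ {0} * ν (Ici (k + 1)) + ρ {0}ᶜ * ν (Ici k) ≤ (ρ ∗ ν) (Ici (k + 1)) := by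
  have hconv : (ρ ∗ ν) (Ici (k + 1)) = ∫⁻ x, ν ((x + ·) ⁻¹' Ici (k + 1)) ∂ρ := by
    rw [Measure.conv, Measure.map_apply measurable_add measurableSet_Ici,
      Measure.prod_apply (measurable_add measurableSet_Ici)]
    rfl
  have hshift : ∀ x, ({0} : Set ℕ).indicator (fun _ ↦ ν (Ici (k + 1))) x
      + ({0}ᶜ : Set ℕ).indicator (fun _ ↦ ν (Ici k)) x ≤ ν ((x + ·) ⁻¹' Ici (k + 1)) := by
    rintro (_ | x)
    · simp
    · simp only [mem_singleton_iff, Nat.add_one_ne_zero, not_false_eq_true, indicator_of_notMem,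
        mem_compl_iff, indicator_of_mem, zero_add]
      exact measure_mono fun y (hy : k ≤ y) ↦ show k + 1 ≤ x + 1 + y by omega
  calc ρ {0} * ν (Ici (k + 1)) + ρ {0}ᶜ * ν (Ici k)
      = ∫⁻ x, ({0} : Set ℕ).indicator (fun _ ↦ ν (Ici (k + 1))) x
          + ({0}ᶜ : Set ℕ).indicator (fun _ ↦ ν (Ici k)) x ∂ρ := by
        rw [lintegral_add_left (measurable_const.indicator (measurableSet_singleton 0)),
          lintegral_indicator_const (measurableSet_singleton 0),
          lintegral_indicator_const (measurableSet_singleton 0).compl]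
        ring
    _ ≤ (ρ ∗ ν) (Ici (k + 1)) := hconv ▸ lintegral_mono hshift

namespace ProbabilityTheory

theorem poissonMeasure_singleton_zero (r : ℝ≥0) :
    poissonMeasure r {0} = ENNReal.ofReal (Real.exp (-r)) := by
  simp [poissonMeasure_singleton]

theorem iIndepFun.iIndepSet_preimage {ι Ω β : Type*} [MeasurableSpace Ω] [MeasurableSpace β]
    {μ : Measure Ω} {X : ι → Ω → β} (hX : ∀ i, Measurable (X i)) (hind : iIndepFun X μ)
    {S : ι → Set β} (hS : ∀ i, MeasurableSet (S i)) :
    iIndepSet (fun i ↦ X i ⁻¹' S i) μ :=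
  (iIndepSet_iff_meas_biInter fun i ↦ hX i (hS i)).2 fun s ↦
    hind.measure_inter_preimage_eq_mul s (sets := S) fun i _ ↦ hS i

theorem measure_succ_le_add_indicator {Ω : Type*} [MeasurableSpace Ω] {μ : Measure Ω}
    {B : Set Ω} {X : Ω → ℕ} (hB : MeasurableSet B) (hX : Measurable X)
    (hind : IndepFun X (B.indicator (1 : Ω → ℕ)) μ) (k : ℕ) :
    μ {ω | k + 1 ≤ X ω + B.indicator 1 ω} =
      μ B * μ {ω | k ≤ X ω} + μ Bᶜ * μ {ω | k + 1 ≤ X ω} := by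
  have hsplit : {ω | k + 1 ≤ X ω + B.indicator 1 ω} =
      (X ⁻¹' Ici k ∩ B.indicator 1 ⁻¹' {1}) ∪ (X ⁻¹' Ici (k + 1) ∩ B.indicator 1 ⁻¹' {0}) := by
    ext ω
    by_cases hω : ω ∈ B <;> simp [hω]
  have hdisj : Disjoint (X ⁻¹' Ici k ∩ B.indicator 1 ⁻¹' {1})
      (X ⁻¹' Ici (k + 1) ∩ B.indicator 1 ⁻¹' {0}) :=
    (disjoint_singleton.2 one_ne_zero).preimage _ |>.mono inter_subset_right inter_subset_right
  have hB1 : B.indicator (1 : Ω → ℕ) ⁻¹' {1} = B := by ext ω; by_cases hω : ω ∈ B <;> simp [hω]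
  have hB0 : B.indicator (1 : Ω → ℕ) ⁻¹' {0} = Bᶜ := by ext ω; by_cases hω : ω ∈ B <;> simp [hω]
  have hprod := hind.measure_inter_preimage_eq_mul
  rw [hsplit, measure_union hdisj ((hX measurableSet_Ici).inter
      ((measurable_const.indicator hB) (measurableSet_singleton 0))),
    hprod _ _ measurableSet_Ici (measurableSet_singleton 1),
    hprod _ _ measurableSet_Ici (measurableSet_singleton 0), hB1, hB0,
    mul_comm, mul_comm (μ (X ⁻¹' _))]
  rfl

theorem measure_le_sum_indicator_le_poissonMeasure {ι Ω : Type*} [MeasurableSpace Ω]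
    {μ : Measure Ω} {A : ι → Set Ω} (hA : ∀ i, MeasurableSet (A i)) (hind : iIndepSet A μ)
    {a : ι → ℝ≥0} (hAa : ∀ i, μ (A i)ᶜ = ENNReal.ofReal (Real.exp (-a i))) (s : Finset ι)
    (k : ℕ) :
    μ {ω | k ≤ ∑ i ∈ s, (A i).indicator 1 ω} ≤ poissonMeasure (∑ i ∈ s, a i) (Ici k) := by
  classical
  have := hind.isProbabilityMeasure
  induction s using Finset.induction_on generalizing k with
  | empty => rcases k with _ | k <;> simp
  | insert i s his ih =>
    rcases k with _ | k
    · simp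
    set X : Ω → ℕ := fun ω ↦ ∑ j ∈ s, (A j).indicator 1 ω
    have hX : Measurable X := Finset.measurable_sum s fun j _ ↦ measurable_const.indicator (hA j)
    have hXA : IndepFun X ((A i).indicator (1 : Ω → ℕ)) μ := by
      simpa only [Finset.sum_fn, ← Pi.one_def] using
        hind.iIndepFun_indicator.indepFun_finsetSum_of_notMem
          (fun j ↦ measurable_const.indicator (hA j)) his
    have hAi : μ (A i) = poissonMeasure (a i) {0}ᶜ := by
      rw [prob_compl_eq_one_sub (measurableSet_singleton 0), poissonMeasure_singleton_zero,
        ← hAa, prob_compl_eq_one_sub (hA i), ENNReal.sub_sub_cancel ENNReal.one_ne_top prob_le_one]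
    calc μ {ω | k + 1 ≤ ∑ j ∈ insert i s, (A j).indicator 1 ω}
        = μ {ω | k + 1 ≤ X ω + (A i).indicator 1 ω} := by
          simp only [Finset.sum_insert his, add_comm, X]
      _ = μ (A i) * μ {ω | k ≤ X ω} + μ (A i)ᶜ * μ {ω | k + 1 ≤ X ω} :=
          measure_succ_le_add_indicator (hA i) hX hXA k
      _ ≤ poissonMeasure (a i) {0}ᶜ * poissonMeasure (∑ j ∈ s, a j) (Ici k) +
          poissonMeasure (a i) {0} * poissonMeasure (∑ j ∈ s, a j) (Ici (k + 1)) := by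
          rw [hAi, hAa, poissonMeasure_singleton_zero]
          gcongr
          · exact ih k
          · exact ih (k + 1)
      _ ≤ (poissonMeasure (a i) ∗ poissonMeasure (∑ j ∈ s, a j)) (Ici (k + 1)) :=
          (add_comm _ _).trans_le (Measure.le_conv_apply_Ici_succ _ _ k)
      _ = poissonMeasure (∑ j ∈ insert i s, a j) (Ici (k + 1)) := by
          rw [poissonMeasure_conv_poissonMeasure, Finset.sum_insert his]

end ProbabilityTheory

end

theorem exponential_count_poisson_domination_general
    {Ω : Type*} [MeasurableSpace Ω] (μ : Measure Ω)
    {Ω' : Type*} [MeasurableSpace Ω'] (μ' : Measure Ω')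
    (n : ℕ) (E : Fin n → Ω → ℝ) (hmeas : ∀ i, Measurable (E i))
    (hindep : iIndepFun E μ)
    (lam : Fin n → ℝ) (hlam : ∀ i, 0 < lam i)
    (hexp : ∀ i, ∀ s : ℝ, 0 ≤ s →
      μ {ω | s < E i ω} = ENNReal.ofReal (Real.exp (-(lam i * s))))
    (t : ℝ) (ht : 0 ≤ t)
    (P : Ω' → ℕ) (hPmeas : Measurable P)
    (hP : ∀ m : ℕ, μ' {ω | P ω = m} =
      ENNReal.ofReal (Real.exp (-(t * ∑ i, lam i)) * (t * ∑ i, lam i) ^ m /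
        m.factorial)) :
    ∀ k : ℕ,
      μ {ω | (k : ℝ) ≤ ∑ i, (if E i ω ≤ t then (1 : ℝ) else 0)} ≤
        μ' {ω | k ≤ P ω} := by
  intro k
  set A : Fin n → Set Ω := fun i ↦ E i ⁻¹' Set.Iic t
  have hA : ∀ i, MeasurableSet (A i) := fun i ↦ hmeas i measurableSet_Iic
  have hindA : iIndepSet A μ := hindep.iIndepSet_preimage hmeas fun _ ↦ measurableSet_Iic
  set a : Fin n → ℝ≥0 := fun i ↦ ⟨lam i * t, mul_nonneg (hlam i).le ht⟩
  have hAc : ∀ i, μ (A i)ᶜ = ENNReal.ofReal (Real.exp (-a i)) := fun i ↦ by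
    have hcompl : (A i)ᶜ = {ω | t < E i ω} := by ext; simp [A]
    rw [hcompl, hexp i t ht]
    rfl
  have hsum : ((∑ i, a i : ℝ≥0) : ℝ) = t * ∑ i, lam i := by
    rw [NNReal.coe_sum, Finset.mul_sum]
    exact Finset.sum_congr rfl fun i _ ↦ mul_comm _ _
  have hlaw : μ'.map P = poissonMeasure (∑ i, a i) := Measure.ext_of_singleton fun m ↦ by
    rw [Measure.map_apply hPmeas (measurableSet_singleton m), poissonMeasure_singleton, hsum]
    exact hP m
  have hcount : {ω | (k : ℝ) ≤ ∑ i, (if E i ω ≤ t then (1 : ℝ) else 0)} =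
      {ω | k ≤ ∑ i, (A i).indicator 1 ω} := by
    ext ω
    simp [A, Set.indicator, Finset.sum_boole]
  calc μ {ω | (k : ℝ) ≤ ∑ i, (if E i ω ≤ t then (1 : ℝ) else 0)}
      = μ {ω | k ≤ ∑ i, (A i).indicator 1 ω} := congrArg μ hcount
    _ ≤ poissonMeasure (∑ i, a i) (Set.Ici k) :=
      measure_le_sum_indicator_le_poissonMeasure hA hindA hAc Finset.univ k
    _ = μ' {ω | k ≤ P ω} := by
      rw [← hlaw, Measure.map_apply hPmeas measurableSet_Ici]
      rfl

/-- The number of independent exponential clocks (rates `λ_i > 0`) that ring by time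
`t ≥ 0` is stochastically dominated by a Poisson random variable with mean
`t·(λ_1 + ⋯ + λ_n)`: for all `k ∈ ℕ`, `P(Σ_i 1{E_i ≤ t} ≥ k) ≤ P(N ≥ k)`. -/
theorem exponential_count_poisson_domination
    {Ω : Type*} [MeasurableSpace Ω] (μ : Measure Ω) [IsProbabilityMeasure μ]
    {Ω' : Type*} [MeasurableSpace Ω'] (μ' : Measure Ω') [IsProbabilityMeasure μ']
    (n : ℕ) (E : Fin n → Ω → ℝ) (hmeas : ∀ i, Measurable (E i))
    (hindep : iIndepFun E μ)
    (lam : Fin n → ℝ) (hlam : ∀ i, 0 < lam i)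
    (hexp : ∀ i, ∀ s : ℝ, 0 ≤ s →
      μ {ω | s < E i ω} = ENNReal.ofReal (Real.exp (-(lam i * s))))
    (t : ℝ) (ht : 0 ≤ t)
    (P : Ω' → ℕ) (hPmeas : Measurable P)
    (hP : ∀ m : ℕ, μ' {ω | P ω = m} =
      ENNReal.ofReal (Real.exp (-(t * ∑ i, lam i)) * (t * ∑ i, lam i) ^ m /
        m.factorial)) :
    ∀ k : ℕ,
      μ {ω | (k : ℝ) ≤ ∑ i, (if E i ω ≤ t then (1 : ℝ) else 0)} ≤
        μ' {ω | k ≤ P ω} :=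
  exponential_count_poisson_domination_general μ μ' n E hmeas hindep lam hlam hexp t ht P hPmeas hP
end

section
/- Let (S_i)_{i≥1} be independent, identically distributed, strictly positive random variables with E[S_1] < ∞ and common distribution function F, let p ∈ (0,1), and suppose ξ_p is the unique real with F(ξ_p) = p and that F is continuous and strictly increasing in a neighborhood of ξ_p. Let S_{(1)} ≤ ⋯ ≤ S_{(n)} denote the order statistics (nondecreasing rearrangement) of S_1, …, S_n. Then (1/n)·|Σ_{j=1}^n S_j·1{S_j ≤ ξ_p} − Σ_{j=1}^n S_j·1{S_j ≤ S_{(⌊pn⌋)}}| → 0 almost surely as n → ∞. -/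
/-!
By the strong law of large numbers for the indicators `1{S_j ≤ t}`, almost surely the empirical
distribution function `F_n` converges to `F` at every point of the countable family `ξ ± ε_k`.
Since `F` is strictly increasing near `ξ`, `F (ξ - ε) < p < F (ξ + ε)`, so eventually the sample
quantile `S_(⌊pn⌋)` lies in `[ξ - ε, ξ + ε]`. The two truncated sums then differ only in terms
with `ξ - ε < S_j ≤ ξ + ε`, each bounded by `|ξ| + δ`, so the normalised difference is eventually
at most `(|ξ| + δ) (F_n (ξ + ε) - F_n (ξ - ε))`, whose limit `(|ξ| + δ) (F (ξ + ε) - F (ξ - ε))`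
tends to `0` with `ε` by continuity of `F` at `ξ`.
-/

open MeasureTheory Filter ProbabilityTheory

open scoped Classical in
/-- `orderStatEmp S n k ω` is the `k`-th order statistic (k-th smallest value) of
`S_1(ω), …, S_n(ω)`, defined as the empirical quantile
`inf {x | #{1 ≤ i ≤ n : S_i(ω) ≤ x} ≥ k}`. -/
noncomputable def orderStatEmp {Ω : Type*} (S : ℕ → Ω → ℝ) (n k : ℕ) (ω : Ω) : ℝ :=
  sInf {x : ℝ | k ≤ ((Finset.Icc 1 n).filter (fun i => S i ω ≤ x)).card}

open Finset Topology

lemma abs_ite_sub_ite_le {a b u v C x : ℝ} (hu : u ∈ Set.Icc a b) (hv : v ∈ Set.Icc a b)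
    (ha : |a| ≤ C) (hb : |b| ≤ C) :
    |(if x ≤ u then x else 0) - (if x ≤ v then x else 0)| ≤
      C * ((if x ≤ b then 1 else 0) - (if x ≤ a then 1 else 0)) := by
  obtain ⟨hau, hub⟩ := hu
  obtain ⟨hav, hvb⟩ := hv
  rcases le_or_gt x a with hxa | hax
  · simp [hxa.trans hau, hxa.trans hav, hxa, hxa.trans (hau.trans hub)]
  rcases le_or_gt x b with hxb | hbx
  · have hxC : |x| ≤ C := abs_le.2 ⟨by linarith [neg_abs_le a], by linarith [le_abs_self b]⟩
    simp only [hxb, not_le.2 hax, if_true, if_false, sub_zero, mul_one]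
    split_ifs <;> simp [hxC, (abs_nonneg x).trans hxC]
  · simp [not_le.2 (hub.trans_lt hbx), not_le.2 (hvb.trans_lt hbx), not_le.2 hbx,
      not_le.2 ((hau.trans hub).trans_lt hbx)]

lemma abs_sum_ite_sub_sum_ite_le {ι : Type*} (s : Finset ι) (x : ι → ℝ) {a b u v C : ℝ}
    (hu : u ∈ Set.Icc a b) (hv : v ∈ Set.Icc a b) (ha : |a| ≤ C) (hb : |b| ≤ C) :
    |∑ i ∈ s, (if x i ≤ u then x i else 0) - ∑ i ∈ s, (if x i ≤ v then x i else 0)| ≤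
      C * ((#{i ∈ s | x i ≤ b} : ℝ) - #{i ∈ s | x i ≤ a}) := by
  rw [← sum_sub_distrib]
  refine (abs_sum_le_sum_abs _ _).trans ?_
  calc ∑ i ∈ s, |(if x i ≤ u then x i else 0) - (if x i ≤ v then x i else 0)|
      ≤ ∑ i ∈ s, C * ((if x i ≤ b then 1 else 0) - (if x i ≤ a then 1 else 0)) :=
        sum_le_sum fun i _ => abs_ite_sub_ite_le hu hv ha hb
    _ = C * ((#{i ∈ s | x i ≤ b} : ℝ) - #{i ∈ s | x i ≤ a}) := by
        rw [← mul_sum, sum_sub_distrib, sum_boole, sum_boole]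

lemma tendsto_zero_of_forall_eventually_le {α ι : Type*} {f : Filter α} {l : Filter ι}
    [l.NeBot] {u : α → ℝ} {v : ι → α → ℝ} {L : ι → ℝ} (hu : ∀ n, 0 ≤ u n)
    (huv : ∀ i, ∀ᶠ n in f, u n ≤ v i n) (hv : ∀ i, Tendsto (v i) f (𝓝 (L i)))
    (hL : Tendsto L l (𝓝 0)) : Tendsto u f (𝓝 0) := by
  refine tendsto_order.2 ⟨fun a ha => .of_forall fun n => ha.trans_le (hu n), fun b hb => ?_⟩
  obtain ⟨i, hi⟩ := (hL.eventually (gt_mem_nhds hb)).exists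
  filter_upwards [huv i, (hv i).eventually (gt_mem_nhds hi)] with n h₁ h₂ using h₁.trans_lt h₂

section SampleCount

variable {Ω : Type*}

noncomputable def sampleCount (S : ℕ → Ω → ℝ) (n : ℕ) (t : ℝ) (ω : Ω) : ℕ :=
  #{i ∈ Icc 1 n | S i ω ≤ t}

lemma sampleCount_mono (S : ℕ → Ω → ℝ) (n : ℕ) (ω : Ω) :
    Monotone fun t => sampleCount S n t ω :=
  fun _ _ hst => card_le_card <| monotone_filter_right _ fun _ _ hi => hi.trans hst

lemma orderStatEmp_mem_Icc {S : ℕ → Ω → ℝ} {n k : ℕ} {ω : Ω} {a b : ℝ}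
    (ha : sampleCount S n a ω < k) (hb : k ≤ sampleCount S n b ω) :
    orderStatEmp S n k ω ∈ Set.Icc a b := by
  have hlower : a ∈ lowerBounds {x : ℝ | k ≤ sampleCount S n x ω} := fun x hx =>
    le_of_not_gt fun hxa => (hx.trans (sampleCount_mono S n ω hxa.le)).not_gt ha
  exact ⟨le_csInf ⟨b, hb⟩ hlower, csInf_le ⟨a, hlower⟩ hb⟩

lemma tendsto_sampleCount_div_ae [MeasurableSpace Ω] {μ : Measure Ω}
    [IsFiniteMeasure μ] {S : ℕ → Ω → ℝ}
    (hindep : Pairwise fun i j => IndepFun (S i) (S j) μ)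
    (hident : ∀ i, IdentDistrib (S i) (S 1) μ μ) (t : ℝ) :
    ∀ᵐ ω ∂μ, Tendsto (fun n : ℕ => (sampleCount S n t ω : ℝ) / n) atTop
      (𝓝 (μ.real {ω | S 1 ω ≤ t})) := by
  set φ : ℝ → ℝ := (Set.Iic t).indicator 1
  have hφ : Measurable φ := measurable_one.indicator measurableSet_Iic
  set X : ℕ → Ω → ℝ := fun i => φ ∘ S (i + 1)
  have hS1 : AEMeasurable (S 1) μ := (hident 1).aemeasurable_snd
  have hφint : Integrable φ (μ.map (S 1)) := (integrable_const 1).indicator measurableSet_Iic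
  have hmean : μ[X 0] = μ.real {ω | S 1 ω ≤ t} := by
    change ∫ ω, φ (S 1 ω) ∂μ = _
    rw [← integral_map hS1 hφ.aestronglyMeasurable, integral_indicator_one measurableSet_Iic,
      map_measureReal_apply_of_aemeasurable hS1 measurableSet_Iic]
    rfl
  have hX : ∀ᵐ ω ∂μ, Tendsto (fun n : ℕ => (n : ℝ)⁻¹ • ∑ i ∈ range n, X i ω) atTop
      (𝓝 (μ.real {ω | S 1 ω ≤ t})) :=
    hmean ▸ strong_law_ae X (hφint.comp_aemeasurable hS1)
      (fun i j hij => (hindep (by omega : i + 1 ≠ j + 1)).comp hφ hφ)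
      (fun i => (hident (i + 1)).comp hφ)
  filter_upwards [hX] with ω hω
  convert hω using 2 with n
  rw [smul_eq_mul, inv_mul_eq_div]
  change _ = (∑ i ∈ range n, φ (S (i + 1) ω)) / n
  rw [range_eq_Ico, sum_Ico_add' (fun i => φ (S i ω)), zero_add,
    Ico_add_one_right_eq_Icc, sampleCount, card_eq_sum_ones, sum_filter]
  simp [φ, Set.indicator_apply]

lemma eventually_orderStatEmp_floor_mem_Icc {S : ℕ → Ω → ℝ} {ω : Ω}
    {p a b Fa Fb : ℝ} (hp : 0 ≤ p)
    (ha : Tendsto (fun n : ℕ => (sampleCount S n a ω : ℝ) / n) atTop (𝓝 Fa)) (hFa : Fa < p)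
    (hb : Tendsto (fun n : ℕ => (sampleCount S n b ω : ℝ) / n) atTop (𝓝 Fb)) (hFb : p < Fb) :
    ∀ᶠ n : ℕ in atTop, orderStatEmp S n ⌊p * n⌋₊ ω ∈ Set.Icc a b := by
  have hfloor : Tendsto (fun n : ℕ => (⌊p * n⌋₊ : ℝ) / n) atTop (𝓝 p) :=
    (tendsto_nat_floor_mul_div_atTop hp).comp tendsto_natCast_atTop_atTop
  filter_upwards [ha.eventually_lt hfloor hFa, hb.eventually_const_lt hFb,
    eventually_gt_atTop 0] with n hna hnb hn
  have hn : (0 : ℝ) < n := Nat.cast_pos.2 hn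
  refine orderStatEmp_mem_Icc ?_ ?_
  · exact_mod_cast (div_lt_div_iff_of_pos_right hn).1 hna
  · have hlt : (⌊p * n⌋₊ : ℝ) < sampleCount S n b ω :=
      (Nat.floor_le (by positivity)).trans_lt ((lt_div_iff₀ hn).1 hnb)
    exact_mod_cast hlt.le

end SampleCount

theorem truncated_sum_at_sample_quantile_general
    {Ω : Type*} [MeasurableSpace Ω] (μ : Measure Ω) [IsProbabilityMeasure μ]
    (S : ℕ → Ω → ℝ)
    (hindep : iIndepFun S μ)
    (hident : ∀ i, IdentDistrib (S i) (S 1) μ μ)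
    (F : ℝ → ℝ) (hF : ∀ t, F t = (μ {ω | S 1 ω ≤ t}).toReal)
    (p : ℝ) (hp0 : 0 < p)
    (ξ : ℝ) (hξ : F ξ = p)
    (hreg : ∃ δ > 0, ContinuousOn F (Set.Ioo (ξ - δ) (ξ + δ)) ∧
      StrictMonoOn F (Set.Ioo (ξ - δ) (ξ + δ))) :
    ∀ᵐ ω ∂μ,
      Tendsto
        (fun n : ℕ =>
          (1 / (n : ℝ)) *
            |(∑ j ∈ Finset.Icc 1 n, (if S j ω ≤ ξ then S j ω else 0)) -
              ∑ j ∈ Finset.Icc 1 n,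
                (if S j ω ≤ orderStatEmp S n ⌊p * (n : ℝ)⌋₊ ω then S j ω else 0)|)
        atTop (nhds 0) := by
  obtain ⟨δ, hδ, hcont, hmono⟩ := hreg
  set ε : ℕ → ℝ := fun k => δ / (k + 2)
  have hε : ∀ k, 0 < ε k ∧ ε k < δ := fun k =>
    ⟨by positivity, div_lt_self hδ (by linarith [k.cast_nonneg (α := ℝ)])⟩
  have hε0 : Tendsto ε atTop (𝓝 0) :=
    tendsto_const_nhds.div_atTop (tendsto_atTop_add_const_right _ 2 tendsto_natCast_atTop_atTop)
  have hξmem : ξ ∈ Set.Ioo (ξ - δ) (ξ + δ) := ⟨by linarith, by linarith⟩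
  have hFε : ∀ k, F (ξ - ε k) < p ∧ p < F (ξ + ε k) := fun k => by
    obtain ⟨h₀, h₁⟩ := hε k
    exact hξ ▸ ⟨hmono ⟨by linarith, by linarith⟩ hξmem (by linarith),
      hmono hξmem ⟨by linarith, by linarith⟩ (by linarith)⟩
  have hC : ∀ k, |ξ - ε k| ≤ |ξ| + δ ∧ |ξ + ε k| ≤ |ξ| + δ := fun k => by
    obtain ⟨h₀, h₁⟩ := hε k
    constructor <;> rw [abs_le] <;> constructor <;> linarith [le_abs_self ξ, neg_abs_le ξ]
  have hFn : ∀ t, ∀ᵐ ω ∂μ, Tendsto (fun n : ℕ => (sampleCount S n t ω : ℝ) / n) atTop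
      (𝓝 (F t)) := fun t => by
    simpa only [hF, measureReal_def] using
      tendsto_sampleCount_div_ae (fun i j hij => hindep.indepFun hij) hident t
  filter_upwards [ae_all_iff.2 fun k => (hFn (ξ - ε k)).and (hFn (ξ + ε k))] with ω hω
  refine tendsto_zero_of_forall_eventually_le (fun n => by positivity) (fun k => ?_)
    (fun k => ((hω k).2.sub (hω k).1).const_mul (|ξ| + δ)) (l := atTop) ?_
  · filter_upwards [eventually_orderStatEmp_floor_mem_Icc hp0.le (hω k).1 (hFε k).1 (hω k).2
      (hFε k).2] with n hQ
    calc _ ≤ 1 / (n : ℝ) * ((|ξ| + δ) *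
          ((sampleCount S n (ξ + ε k) ω : ℝ) - sampleCount S n (ξ - ε k) ω)) := by
          gcongr
          exact abs_sum_ite_sub_sum_ite_le _ _ ⟨by linarith [hε k], by linarith [hε k]⟩ hQ
            (hC k).1 (hC k).2
      _ = _ := by ring
  · have hcontξ : ContinuousAt F ξ := hcont.continuousAt (Ioo_mem_nhds hξmem.1 hξmem.2)
    simpa using ((hcontξ.tendsto.comp (by simpa using tendsto_const_nhds.add hε0)).sub
      (hcontξ.tendsto.comp (by simpa using tendsto_const_nhds.sub hε0))).const_mul (|ξ| + δ)

/-- For i.i.d. positive integrable `(S_i)` whose distribution function `F` has a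
unique `p`-th quantile `ξ_p` near which `F` is continuous and strictly increasing,
`(1/n)·|Σ_{j≤n} S_j·1{S_j ≤ ξ_p} − Σ_{j≤n} S_j·1{S_j ≤ S_(⌊pn⌋)}| → 0` a.s. -/
theorem truncated_sum_at_sample_quantile
    {Ω : Type*} [MeasurableSpace Ω] (μ : Measure Ω) [IsProbabilityMeasure μ]
    (S : ℕ → Ω → ℝ) (hmeas : ∀ i, Measurable (S i))
    (hindep : iIndepFun S μ)
    (hident : ∀ i, IdentDistrib (S i) (S 1) μ μ)
    (hpos : ∀ i, ∀ᵐ ω ∂μ, 0 < S i ω)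
    (hint : Integrable (S 1) μ)
    (F : ℝ → ℝ) (hF : ∀ t, F t = (μ {ω | S 1 ω ≤ t}).toReal)
    (p : ℝ) (hp0 : 0 < p) (hp1 : p < 1)
    (ξ : ℝ) (hξ : F ξ = p) (huniq : ∀ x, F x = p → x = ξ)
    (hreg : ∃ δ > 0, ContinuousOn F (Set.Ioo (ξ - δ) (ξ + δ)) ∧
      StrictMonoOn F (Set.Ioo (ξ - δ) (ξ + δ))) :
    ∀ᵐ ω ∂μ,
      Tendsto
        (fun n : ℕ =>
          (1 / (n : ℝ)) *
            |(∑ j ∈ Finset.Icc 1 n, (if S j ω ≤ ξ then S j ω else 0)) -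
              ∑ j ∈ Finset.Icc 1 n,
                (if S j ω ≤ orderStatEmp S n ⌊p * (n : ℝ)⌋₊ ω then S j ω else 0)|)
        atTop (nhds 0) :=
  truncated_sum_at_sample_quantile_general μ S hindep hident F hF p hp0 ξ hξ hreg
end

section
/- Let (S_i)_{i≥1} be independent, identically distributed, strictly positive random variables with E[S_1] < ∞ and common distribution function F, let p ∈ (0,1), and suppose ξ_p is the unique real with F(ξ_p) = p and that F is continuous and strictly increasing in a neighborhood of ξ_p. Let S_{(1)} ≤ ⋯ ≤ S_{(n)} denote the order statistics (nondecreasing rearrangement) of S_1, …, S_n. Then (1/n)·Σ_{j=1}^{⌊pn⌋} S_{(j)} → E[S_1·1{S_1 ≤ ξ_p}] almost surely as n → ∞. -/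
/-!
Write `k = ⌊pn⌋` and `ξ̂ₙ = S₍ₖ₎` for the empirical `p`-quantile. For the sorted sample one has
the exact identity `∑_{j ≤ k} S₍ⱼ₎ = k ξ̂ₙ - ∑_{i ≤ n} (ξ̂ₙ - Sᵢ)⁺`.
The strong law applied to the indicators `1{Sᵢ ≤ q}`, `q` rational, together with strict
monotonicity of `F` around `ξ`, gives `ξ̂ₙ → ξ` almost surely. Since `t ↦ (1/n) ∑ (t - Sᵢ)⁺` is
`1`-Lipschitz, the strong law at the single point `ξ` then yields
`(1/n) ∑ (ξ̂ₙ - Sᵢ)⁺ → E (ξ - S₁)⁺`, and the limit `pξ - E (ξ - S₁)⁺` is `E [S₁ 1{S₁ ≤ ξ}]`.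
-/

open MeasureTheory Filter ProbabilityTheory

open Finset
open scoped Topology

namespace List.SortedLE

variable {α : Type*} {l : List α}

theorem add_one_le_countP_le_iff [LinearOrder α] (hl : l.SortedLE) {j : ℕ} (hj : j < l.length)
    (x : α) : j + 1 ≤ l.countP (· ≤ x) ↔ l[j] ≤ x := by
  constructor
  · intro h
    by_contra! hx
    have hdrop : (l.drop j).countP (· ≤ x) = 0 := by
      refine List.countP_eq_zero.2 fun a ha => ?_
      obtain ⟨i, hi, rfl⟩ := List.mem_drop_iff_getElem.1 ha
      simpa using hx.trans_le (hl.getElem_le_getElem_of_le (by omega))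
    have htake : (l.take j).countP (· ≤ x) ≤ j :=
      List.countP_le_length.trans (by simp)
    rw [← List.take_append_drop j l, List.countP_append] at h
    omega
  · intro hx
    have htake : (l.take (j + 1)).countP (· ≤ x) = j + 1 := by
      rw [List.countP_eq_length.2 fun a ha => ?_]
      · simp only [List.length_take]; omega
      obtain ⟨i, hi, rfl⟩ := List.mem_take_iff_getElem.1 ha
      simpa using (hl.getElem_le_getElem_of_le (by omega)).trans hx
    exact htake ▸ (List.take_sublist _ _).countP_le

theorem sum_map_posPart_getElem_sub [AddCommGroup α] [LinearOrder α] [IsOrderedAddMonoid α]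
    (hl : l.SortedLE) {k : ℕ} (hk : k < l.length) :
    (l.map fun s => max (l[k] - s) 0).sum = (k + 1) • l[k] - (l.take (k + 1)).sum := by
  set t := l[k]
  have hhead : ∀ s ∈ l.take (k + 1), max (t - s) 0 = t - s := by
    intro s hs
    obtain ⟨i, hi, rfl⟩ := List.mem_take_iff_getElem.1 hs
    exact max_eq_left (sub_nonneg.2 (hl.getElem_le_getElem_of_le (by omega)))
  have htail : ∀ s ∈ l.drop (k + 1), max (t - s) 0 = 0 := by
    intro s hs
    obtain ⟨i, hi, rfl⟩ := List.mem_drop_iff_getElem.1 hs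
    exact max_eq_right (sub_nonpos.2 (hl.getElem_le_getElem_of_le (by omega)))
  have hsub : ∀ m : List α, (m.map (t - ·)).sum = m.length • t - m.sum := by
    intro m
    induction m with
    | nil => simp
    | cons a m ih =>
      simp only [List.map_cons, List.sum_cons, ih, List.length_cons, succ_nsmul]
      abel
  conv_lhs => rw [← List.take_append_drop (k + 1) l]
  rw [List.map_append, List.sum_append, List.map_congr_left hhead, List.map_congr_left htail,
    hsub, List.length_take_of_le hk]
  simp

end List.SortedLE

theorem eventually_lt_of_tendsto_div_atTop {u v : ℕ → ℝ} {a b : ℝ}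
    (hu : Tendsto (fun n : ℕ => u n / n) atTop (𝓝 a))
    (hv : Tendsto (fun n : ℕ => v n / n) atTop (𝓝 b)) (hab : a < b) :
    ∀ᶠ n in atTop, u n < v n := by
  filter_upwards [hu.eventually_lt hv hab, eventually_gt_atTop 0] with n h hn
  exact (div_lt_div_iff_of_pos_right (by positivity)).1 h

theorem abs_sum_posPart_sub_sub_le {ι : Type*} (s : Finset ι) (y : ι → ℝ) (t t' : ℝ) :
    |∑ i ∈ s, max (t - y i) 0 - ∑ i ∈ s, max (t' - y i) 0| ≤ #s * |t - t'| := by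
  rw [← sum_sub_distrib]
  refine (abs_sum_le_sum_abs _ _).trans ?_
  refine (sum_le_card_nsmul _ _ _ fun i _ => ?_).trans (by rw [nsmul_eq_mul])
  simpa using abs_max_sub_max_le_abs (t - y i) (t' - y i) 0

theorem tendsto_sum_posPart_sub_div {y x : ℕ → ℝ} {ξ L : ℝ} (hx : Tendsto x atTop (𝓝 ξ))
    (hξ : Tendsto (fun n : ℕ => (∑ i ∈ Icc 1 n, max (ξ - y i) 0) / n) atTop (𝓝 L)) :
    Tendsto (fun n : ℕ => (∑ i ∈ Icc 1 n, max (x n - y i) 0) / n) atTop (𝓝 L) := by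
  have hdiff : Tendsto (fun n : ℕ => (∑ i ∈ Icc 1 n, max (x n - y i) 0) / n -
      (∑ i ∈ Icc 1 n, max (ξ - y i) 0) / n) atTop (𝓝 0) := by
    refine squeeze_zero_norm' ?_ (by simpa using (hx.sub_const ξ).abs)
    filter_upwards [eventually_gt_atTop 0] with n hn
    have hn' : (0 : ℝ) < n := by exact_mod_cast hn
    rw [Real.norm_eq_abs, ← sub_div, abs_div, abs_of_pos hn', div_le_iff₀ hn', mul_comm]
    simpa using abs_sum_posPart_sub_sub_le (Icc 1 n) y (x n) ξ
  simpa using hdiff.add hξ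

section OrderStatistics

variable {Ω : Type*} (S : ℕ → Ω → ℝ) (n : ℕ) (ω : Ω)

noncomputable def sortedSample : List ℝ :=
  ((Icc 1 n).val.map (S · ω)).sort

theorem sortedLE_sortedSample : (sortedSample S n ω).SortedLE :=
  (Multiset.pairwise_sort _ _).sortedLE

theorem coe_sortedSample : (sortedSample S n ω : Multiset ℝ) = (Icc 1 n).val.map (S · ω) :=
  Multiset.sort_eq _ _

@[simp]
theorem length_sortedSample : (sortedSample S n ω).length = n := by
  simpa using congrArg Multiset.card (coe_sortedSample S n ω)

theorem countP_sortedSample (x : ℝ) :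
    (sortedSample S n ω).countP (· ≤ x) = #{i ∈ Icc 1 n | S i ω ≤ x} := by
  rw [← Multiset.coe_countP, coe_sortedSample, Multiset.countP_map]
  rfl

theorem sum_map_sortedSample (f : ℝ → ℝ) :
    ((sortedSample S n ω).map f).sum = ∑ i ∈ Icc 1 n, f (S i ω) := by
  rw [← Multiset.sum_coe, ← Multiset.map_coe, coe_sortedSample, Multiset.map_map]
  rfl

variable {S n} {k : ℕ}

theorem orderStatEmp_add_one_eq_getElem (hk : k < n) :
    orderStatEmp S n (k + 1) ω = (sortedSample S n ω)[k]'(by simpa using hk) := by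
  have hset : {x : ℝ | k + 1 ≤ #{i ∈ Icc 1 n | S i ω ≤ x}} =
      Set.Ici ((sortedSample S n ω)[k]'(by simpa using hk)) := by
    ext x
    rw [Set.mem_ofPred_eq, ← countP_sortedSample,
      (sortedLE_sortedSample S n ω).add_one_le_countP_le_iff, Set.mem_Ici]
  rw [orderStatEmp, hset, csInf_Ici]

theorem orderStatEmp_le_iff (hk1 : 1 ≤ k) (hkn : k ≤ n) (x : ℝ) :
    orderStatEmp S n k ω ≤ x ↔ k ≤ #{i ∈ Icc 1 n | S i ω ≤ x} := by
  obtain ⟨j, rfl⟩ := Nat.exists_eq_add_of_le' hk1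
  rw [orderStatEmp_add_one_eq_getElem ω (by omega), ← countP_sortedSample,
    (sortedLE_sortedSample S n ω).add_one_le_countP_le_iff]

theorem sum_orderStatEmp_eq_sum_take (hkn : k ≤ n) :
    ∑ j ∈ Icc 1 k, orderStatEmp S n j ω = ((sortedSample S n ω).take k).sum := by
  induction k with
  | zero => simp
  | succ k ih =>
    rw [sum_Icc_succ_top (by omega), ih (by omega), orderStatEmp_add_one_eq_getElem ω hkn,
      List.sum_take_succ]

theorem sum_orderStatEmp_eq (hk1 : 1 ≤ k) (hkn : k ≤ n) :
    ∑ j ∈ Icc 1 k, orderStatEmp S n j ω =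
      k * orderStatEmp S n k ω - ∑ i ∈ Icc 1 n, max (orderStatEmp S n k ω - S i ω) 0 := by
  obtain ⟨j, rfl⟩ := Nat.exists_eq_add_of_le' hk1
  rw [sum_orderStatEmp_eq_sum_take ω hkn, orderStatEmp_add_one_eq_getElem ω (by omega),
    ← sum_map_sortedSample S n ω fun s => max (_ - s) 0,
    (sortedLE_sortedSample S n ω).sum_map_posPart_getElem_sub, nsmul_eq_mul, Nat.cast_succ]
  ring

variable {ω}

theorem tendsto_orderStatEmp_of_tendsto_ecdf {F : ℝ → ℝ} {k : ℕ → ℕ} {p ξ δ : ℝ}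
    (hecdf : ∀ q : ℚ,
      Tendsto (fun n : ℕ => (#{i ∈ Icc 1 n | S i ω ≤ q} : ℝ) / n) atTop (𝓝 (F q)))
    (hk : Tendsto (fun n : ℕ => (k n : ℝ) / n) atTop (𝓝 p))
    (hk1 : ∀ᶠ n in atTop, 1 ≤ k n) (hkn : ∀ n, k n ≤ n)
    (hξ : F ξ = p) (hδ : 0 < δ) (hmono : StrictMonoOn F (Set.Ioo (ξ - δ) (ξ + δ))) :
    Tendsto (fun n => orderStatEmp S n (k n) ω) atTop (𝓝 ξ) := by
  have hξmem : ξ ∈ Set.Ioo (ξ - δ) (ξ + δ) := ⟨by linarith, by linarith⟩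
  refine tendsto_order.2 ⟨fun c hc => ?_, fun c hc => ?_⟩
  · obtain ⟨q, hcq, hqξ⟩ := exists_rat_btwn (max_lt hc (sub_lt_self ξ hδ))
    have hFq : F q < p :=
      hξ ▸ hmono ⟨(le_max_right _ _).trans_lt hcq, by linarith⟩ hξmem hqξ
    filter_upwards [eventually_lt_of_tendsto_div_atTop (hecdf q) hk hFq, hk1] with n hn hn1
    have hq : (q : ℝ) < orderStatEmp S n (k n) ω := by
      rw [← not_le, orderStatEmp_le_iff ω hn1 (hkn n)]
      exact_mod_cast hn.not_ge
    exact ((le_max_left _ _).trans_lt hcq).trans hq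
  · obtain ⟨q, hξq, hqc⟩ := exists_rat_btwn (lt_min hc (lt_add_of_pos_right ξ hδ))
    have hFq : p < F q :=
      hξ ▸ hmono hξmem ⟨by linarith, hqc.trans_le (min_le_right _ _)⟩ hξq
    filter_upwards [eventually_lt_of_tendsto_div_atTop hk (hecdf q) hFq, hk1] with n hn hn1
    have hq : orderStatEmp S n (k n) ω ≤ q :=
      (orderStatEmp_le_iff ω hn1 (hkn n) q).2 (by exact_mod_cast hn.le)
    exact hq.trans_lt (hqc.trans_le (min_le_left _ _))

end OrderStatistics

section StrongLaw

variable {Ω : Type*} [MeasurableSpace Ω] {μ : Measure Ω} {S : ℕ → Ω → ℝ}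

theorem ae_tendsto_sum_Icc_comp_div (hindep : iIndepFun S μ)
    (hident : ∀ i, IdentDistrib (S i) (S 1) μ μ) {f : ℝ → ℝ} (hf : Measurable f)
    (hfi : Integrable (fun ω => f (S 1 ω)) μ) :
    ∀ᵐ ω ∂μ, Tendsto (fun n : ℕ => (∑ i ∈ Icc 1 n, f (S i ω)) / n) atTop
      (𝓝 (∫ ω, f (S 1 ω) ∂μ)) := by
  have h := strong_law_ae_real (fun i ω => f (S (i + 1) ω)) hfi
    (fun i j hij => (hindep.indepFun (by simpa using hij)).comp hf hf)
    (fun i => (hident (i + 1)).comp hf)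
  filter_upwards [h] with ω hω
  have hreindex (n : ℕ) : ∑ i ∈ range n, f (S (i + 1) ω) = ∑ i ∈ Icc 1 n, f (S i ω) := by
    rw [← Nat.Ico_zero_eq_range, sum_Ico_add' (fun i => f (S i ω)), zero_add,
      Ico_add_one_right_eq_Icc]
  simpa only [hreindex] using hω

theorem ae_tendsto_card_filter_le_div [IsFiniteMeasure μ] (hmeas : Measurable (S 1))
    (hindep : iIndepFun S μ) (hident : ∀ i, IdentDistrib (S i) (S 1) μ μ) (c : ℝ) :
    ∀ᵐ ω ∂μ, Tendsto (fun n : ℕ => (#{i ∈ Icc 1 n | S i ω ≤ c} : ℝ) / n) atTop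
      (𝓝 (μ.real {ω | S 1 ω ≤ c})) := by
  have hA : MeasurableSet {ω | S 1 ω ≤ c} := hmeas measurableSet_Iic
  have h := ae_tendsto_sum_Icc_comp_div hindep hident
    (measurable_const.indicator measurableSet_Iic : Measurable ((Set.Iic c).indicator 1))
    ((integrable_const 1).indicator hA)
  filter_upwards [h] with ω hω
  convert hω using 2
  · simp [Set.indicator_apply, sum_boole]
  · exact (integral_indicator_one hA).symm

theorem integral_posPart_sub_eq [IsFiniteMeasure μ] {X : Ω → ℝ} (hX : Measurable X)
    (hint : Integrable X μ) (t : ℝ) :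
    ∫ ω, max (t - X ω) 0 ∂μ =
      t * μ.real {ω | X ω ≤ t} - ∫ ω, (if X ω ≤ t then X ω else 0) ∂μ := by
  have hA : MeasurableSet {ω | X ω ≤ t} := hX measurableSet_Iic
  have hpt : (fun ω => max (t - X ω) 0) =
      fun ω => {ω | X ω ≤ t}.indicator (fun _ => t) ω - {ω | X ω ≤ t}.indicator X ω := by
    ext ω
    by_cases h : X ω ≤ t
    · simp [h]
    · simp [h, (not_le.1 h).le]
  rw [hpt, integral_sub ((integrable_const t).indicator hA) (hint.indicator hA),
    integral_indicator_const t hA, smul_eq_mul, mul_comm]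
  rfl

end StrongLaw

theorem sum_smallest_orderStats_slln_general
    {Ω : Type*} [MeasurableSpace Ω] (μ : Measure Ω) [IsProbabilityMeasure μ]
    (S : ℕ → Ω → ℝ) (hmeas : ∀ i, Measurable (S i))
    (hindep : iIndepFun S μ)
    (hident : ∀ i, IdentDistrib (S i) (S 1) μ μ)
    (hint : Integrable (S 1) μ)
    (F : ℝ → ℝ) (hF : ∀ t, F t = (μ {ω | S 1 ω ≤ t}).toReal)
    (p : ℝ) (hp0 : 0 < p) (hp1 : p < 1)
    (ξ : ℝ) (hξ : F ξ = p)
    (hreg : ∃ δ > 0, ContinuousOn F (Set.Ioo (ξ - δ) (ξ + δ)) ∧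
      StrictMonoOn F (Set.Ioo (ξ - δ) (ξ + δ))) :
    ∀ᵐ ω ∂μ,
      Tendsto
        (fun n : ℕ =>
          (1 / (n : ℝ)) * ∑ j ∈ Finset.Icc 1 ⌊p * (n : ℝ)⌋₊, orderStatEmp S n j ω)
        atTop
        (nhds (∫ ω, (if S 1 ω ≤ ξ then S 1 ω else 0) ∂μ)) := by
  obtain ⟨δ, hδ, -, hmono⟩ := hreg
  have hk : Tendsto (fun n : ℕ => (⌊p * n⌋₊ : ℝ) / n) atTop (𝓝 p) :=
    (tendsto_nat_floor_mul_div_atTop hp0.le).comp tendsto_natCast_atTop_atTop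
  have hk1 : ∀ᶠ n : ℕ in atTop, 1 ≤ ⌊p * n⌋₊ :=
    (tendsto_nat_floor_atTop.comp
      (tendsto_natCast_atTop_atTop.const_mul_atTop hp0)).eventually_ge_atTop 1
  have hkn (n : ℕ) : ⌊p * n⌋₊ ≤ n :=
    Nat.floor_le_of_le (mul_le_of_le_one_left n.cast_nonneg hp1.le)
  have hecdf : ∀ᵐ ω ∂μ, ∀ q : ℚ,
      Tendsto (fun n : ℕ => (#{i ∈ Icc 1 n | S i ω ≤ q} : ℝ) / n) atTop (𝓝 (F q)) := by
    simpa only [measureReal_def, ← hF] using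
      ae_all_iff.2 fun q : ℚ => ae_tendsto_card_filter_le_div (hmeas 1) hindep hident q
  have hslln := ae_tendsto_sum_Icc_comp_div hindep hident (f := fun s => max (ξ - s) 0)
    (by fun_prop) ((integrable_const ξ).sub hint).pos_part
  have hlim : ∫ ω, (if S 1 ω ≤ ξ then S 1 ω else 0) ∂μ =
      p * ξ - ∫ ω, max (ξ - S 1 ω) 0 ∂μ := by
    rw [integral_posPart_sub_eq (hmeas 1) hint, measureReal_def, ← hF, hξ]
    ring
  filter_upwards [hecdf, hslln] with ω hecdf hslln
  have hquant := tendsto_orderStatEmp_of_tendsto_ecdf hecdf hk hk1 hkn hξ hδ hmono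
  rw [hlim]
  refine ((hk.mul hquant).sub (tendsto_sum_posPart_sub_div hquant hslln)).congr' ?_
  filter_upwards [hk1] with n hn
  rw [sum_orderStatEmp_eq ω hn (hkn n)]
  ring

/-- For i.i.d. positive integrable `(S_i)` whose distribution function `F` has a
unique `p`-th quantile `ξ_p` near which `F` is continuous and strictly increasing,
`(1/n)·Σ_{j=1}^{⌊pn⌋} S_(j) → E[S_1·1{S_1 ≤ ξ_p}]` almost surely. -/
theorem sum_smallest_orderStats_slln
    {Ω : Type*} [MeasurableSpace Ω] (μ : Measure Ω) [IsProbabilityMeasure μ]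
    (S : ℕ → Ω → ℝ) (hmeas : ∀ i, Measurable (S i))
    (hindep : iIndepFun S μ)
    (hident : ∀ i, IdentDistrib (S i) (S 1) μ μ)
    (hpos : ∀ i, ∀ᵐ ω ∂μ, 0 < S i ω)
    (hint : Integrable (S 1) μ)
    (F : ℝ → ℝ) (hF : ∀ t, F t = (μ {ω | S 1 ω ≤ t}).toReal)
    (p : ℝ) (hp0 : 0 < p) (hp1 : p < 1)
    (ξ : ℝ) (hξ : F ξ = p) (huniq : ∀ x, F x = p → x = ξ)
    (hreg : ∃ δ > 0, ContinuousOn F (Set.Ioo (ξ - δ) (ξ + δ)) ∧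
      StrictMonoOn F (Set.Ioo (ξ - δ) (ξ + δ))) :
    ∀ᵐ ω ∂μ,
      Tendsto
        (fun n : ℕ =>
          (1 / (n : ℝ)) * ∑ j ∈ Finset.Icc 1 ⌊p * (n : ℝ)⌋₊, orderStatEmp S n j ω)
        atTop
        (nhds (∫ ω, (if S 1 ω ≤ ξ then S 1 ω else 0) ∂μ)) :=
  sum_smallest_orderStats_slln_general μ S hmeas hindep hident hint F hF p hp0 hp1 ξ hξ hreg
end

section
/- Let (S_j)_{j≥1} be independent, identically distributed, strictly positive random variables with common distribution function F, let α > 0, and let f: (0,∞) → [0,∞) be measurable with E[f(S_1)·S_1^α] < ∞. Fix c ∈ (0,1), let p ∈ (c,1), and suppose ξ_p, the p-th quantile of F, satisfies F(ξ_p) = p with F continuous and strictly increasing in a neighborhood of ξ_p, and E[S_1^α·1{S_1 ≤ ξ_p}] > 0. Then there is a finite constant C such that, almost surely, for all sufficiently large n and all subsets ν ⊆ {1,…,n} with |ν| ≤ c·n, (Σ_{j∉ν} f(S_j)·S_j^α) / (Σ_{j∉ν} S_j^α) ≤ C. -/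
open MeasureTheory Filter ProbabilityTheory Finset
open scoped Topology

/-!
Choose `t > 0` with `P(S₁ > t) > c`. By the strong law of large numbers, almost surely a
proportion close to `P(S₁ > t)` of `S₁, …, Sₙ` exceeds `t`, so removing any `c n` indices still
leaves at least a fixed proportion of indices with `S_j ^ α > t ^ α`: the denominator is of
order at least `n`. The numerator is at most the full sum `∑_{j ≤ n} f(S_j) S_j ^ α`, which is
`O(n)` by the strong law again.
-/

section Deterministic

variable {ι : Type*}

lemma card_filter_le_card_filter_sdiff_add_card [DecidableEq ι] (s ν : Finset ι) (p : ι → Prop)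
    [DecidablePred p] : #(s.filter p) ≤ #((s \ ν).filter p) + #ν :=
  calc #(s.filter p) ≤ #(s.filter p \ ν) + #ν := card_le_card_sdiff_add_card
    _ ≤ #((s \ ν).filter p) + #ν := by
      gcongr
      intro j
      simp +contextual

lemma rpow_mul_card_filter_lt_le_sum_rpow (s : Finset ι) {x : ι → ℝ} (hx : ∀ j, 0 ≤ x j)
    {t α : ℝ} (ht : 0 ≤ t) (hα : 0 ≤ α) :
    t ^ α * #(s.filter (t < x ·)) ≤ ∑ j ∈ s, x j ^ α :=
  calc t ^ α * #(s.filter (t < x ·)) = ∑ _j ∈ s.filter (t < x ·), t ^ α := by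
        rw [sum_const, nsmul_eq_mul, mul_comm]
    _ ≤ ∑ j ∈ s.filter (t < x ·), x j ^ α :=
        sum_le_sum fun j hj => Real.rpow_le_rpow ht (mem_filter.1 hj).2.le hα
    _ ≤ ∑ j ∈ s, x j ^ α :=
        sum_le_sum_of_subset_of_nonneg (filter_subset _ _)
          fun j _ _ => Real.rpow_nonneg (hx j) α

lemma sum_sdiff_div_sum_sdiff_rpow_le [DecidableEq ι] (s ν : Finset ι) {a x : ι → ℝ}
    (ha : ∀ j, 0 ≤ a j) (hx : ∀ j, 0 ≤ x j) {t α A B c n : ℝ} (ht : 0 < t) (hα : 0 ≤ α) (hn : 0 < n)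
    (hcB : c < B) (hA : (∑ j ∈ s, a j) / n ≤ A) (hB : B ≤ #(s.filter (t < x ·)) / n)
    (hν : #ν ≤ c * n) :
    (∑ j ∈ s \ ν, a j) / (∑ j ∈ s \ ν, x j ^ α) ≤ A / (t ^ α * (B - c)) := by
  rw [div_le_iff₀ hn] at hA
  rw [le_div_iff₀ hn] at hB
  have hcount : (B - c) * n ≤ #((s \ ν).filter (t < x ·)) := by
    have hcard : (#(s.filter (t < x ·)) : ℝ) ≤ #((s \ ν).filter (t < x ·)) + #ν := by
      exact_mod_cast card_filter_le_card_filter_sdiff_add_card s ν (t < x ·)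
    linarith
  have hden : t ^ α * ((B - c) * n) ≤ ∑ j ∈ s \ ν, x j ^ α :=
    (mul_le_mul_of_nonneg_left hcount (by positivity)).trans
      (rpow_mul_card_filter_lt_le_sum_rpow _ hx ht.le hα)
  have hnum : ∑ j ∈ s \ ν, a j ≤ A * n :=
    (sum_le_sum_of_subset_of_nonneg sdiff_subset fun j _ _ => ha j).trans hA
  have hpos : 0 < t ^ α * ((B - c) * n) := by
    have := sub_pos.2 hcB
    positivity
  calc (∑ j ∈ s \ ν, a j) / (∑ j ∈ s \ ν, x j ^ α) ≤ A * n / (t ^ α * ((B - c) * n)) :=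
        div_le_div₀ ((sum_nonneg fun j _ => ha j).trans hnum) hnum hpos hden
    _ = A / (t ^ α * (B - c)) := by
        rw [← mul_assoc, mul_div_mul_right _ _ hn.ne']

end Deterministic

section Probability

variable {Ω : Type*} [MeasurableSpace Ω] {μ : Measure Ω}

lemma exists_pos_lt_measureReal_lt_of_ae_pos [IsProbabilityMeasure μ] {X : Ω → ℝ}
    (hX : Measurable X) (hpos : ∀ᵐ ω ∂μ, 0 < X ω) {c : ℝ} (hc : c < 1) :
    ∃ t > 0, c < μ.real {ω | t < X ω} := by
  have hnull : μ (⋂ r > (0 : ℝ), {ω | X ω ≤ r}) = 0 := by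
    refine measure_mono_null (fun ω hω => ?_) (ae_iff.1 hpos)
    simp only [Set.mem_iInter, Set.mem_ofPred_eq, not_lt] at hω ⊢
    exact le_of_forall_gt_imp_ge_of_dense hω
  have hlim : Tendsto (fun r => μ.real {ω | X ω ≤ r}) (𝓝[>] 0) (𝓝 0) := by
    have := tendsto_measure_biInter_gt (μ := μ) (s := fun r => {ω | X ω ≤ r}) (a := (0 : ℝ))
      (fun r _ => (hX measurableSet_Iic).nullMeasurableSet)
      (fun i j _ hij ω hω => le_trans hω hij) ⟨1, one_pos, measure_ne_top _ _⟩
    rw [hnull] at this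
    exact (ENNReal.tendsto_toReal ENNReal.zero_ne_top).comp this
  obtain ⟨t, hsmall, ht⟩ :=
    ((hlim.eventually (eventually_lt_nhds (sub_pos.2 hc))).and self_mem_nhdsWithin).exists
  refine ⟨t, ht, ?_⟩
  have hcompl : {ω | t < X ω} = {ω | X ω ≤ t}ᶜ := by ext; simp
  rw [hcompl, probReal_compl_eq_one_sub (measurableSet_le hX measurable_const)]
  linarith

variable {S : ℕ → Ω → ℝ}

lemma strong_law_ae_comp_Icc (hindep : iIndepFun S μ)
    (hident : ∀ i, IdentDistrib (S i) (S 1) μ μ) {g : ℝ → ℝ} (hg : Measurable g)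
    (hint : Integrable (fun ω => g (S 1 ω)) μ) :
    ∀ᵐ ω ∂μ, Tendsto (fun n : ℕ => (∑ j ∈ Icc 1 n, g (S j ω)) / n) atTop
      (𝓝 (∫ ω, g (S 1 ω) ∂μ)) := by
  have := strong_law_ae_real (fun i ω => g (S (i + 1) ω)) hint
    (fun i j hij => (hindep.indepFun (by omega)).comp hg hg) (fun i => (hident (i + 1)).comp hg)
  filter_upwards [this] with ω hω
  simpa only [range_eq_Ico, sum_Ico_add' (fun j => g (S j ω)), zero_add,
    Ico_add_one_right_eq_Icc] using hω

lemma strong_law_ae_card_filter_lt [IsProbabilityMeasure μ] (hmeas : Measurable (S 1))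
    (hindep : iIndepFun S μ) (hident : ∀ i, IdentDistrib (S i) (S 1) μ μ) (t : ℝ) :
    ∀ᵐ ω ∂μ, Tendsto (fun n : ℕ => (#((Icc 1 n).filter (t < S · ω)) : ℝ) / n) atTop
      (𝓝 (μ.real {ω | t < S 1 ω})) := by
  have hset : MeasurableSet {ω | t < S 1 ω} := hmeas measurableSet_Ioi
  have := strong_law_ae_comp_Icc hindep hident (measurable_one.indicator measurableSet_Ioi)
    ((integrable_const (1 : ℝ)).indicator hset)
  rw [← integral_indicator_one hset]
  filter_upwards [this] with ω hω
  simpa [Set.indicator_apply, sum_boole] using hω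

end Probability

theorem size_biased_conditional_mean_unif_bounded_general
    {Ω : Type*} [MeasurableSpace Ω] (μ : Measure Ω) [IsProbabilityMeasure μ]
    (S : ℕ → Ω → ℝ) (hmeas : ∀ i, Measurable (S i))
    (hindep : iIndepFun S μ)
    (hident : ∀ i, IdentDistrib (S i) (S 1) μ μ)
    (hpos : ∀ i, ∀ᵐ ω ∂μ, 0 < S i ω)
    (α : ℝ) (hα : 0 < α)
    (f : ℝ → ℝ) (hfmeas : Measurable f) (hfnonneg : ∀ x : ℝ, 0 < x → 0 ≤ f x)
    (hintf : Integrable (fun ω => f (S 1 ω) * S 1 ω ^ α) μ)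
    (c : ℝ) (hc1 : c < 1) :
    ∃ C : ℝ, ∀ᵐ ω ∂μ, ∃ N : ℕ, ∀ n ≥ N, ∀ ν : Finset ℕ,
      ν ⊆ Finset.Icc 1 n → (ν.card : ℝ) ≤ c * n →
        (∑ j ∈ Finset.Icc 1 n \ ν, f (S j ω) * S j ω ^ α) /
            (∑ j ∈ Finset.Icc 1 n \ ν, S j ω ^ α) ≤ C := by
  obtain ⟨t, ht, hcq⟩ := exists_pos_lt_measureReal_lt_of_ae_pos (hmeas 1) (hpos 1) hc1
  set q := μ.real {ω | t < S 1 ω}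
  set m := ∫ ω, f (S 1 ω) * S 1 ω ^ α ∂μ
  refine ⟨(m + 1) / (t ^ α * ((c + q) / 2 - c)), ?_⟩
  filter_upwards [strong_law_ae_comp_Icc hindep hident
    (g := fun x => f x * x ^ α) (hfmeas.mul (measurable_id.pow_const α)) hintf,
    strong_law_ae_card_filter_lt (hmeas 1) hindep hident t, ae_all_iff.2 hpos]
    with ω hmean hcount hposω
  obtain ⟨N, hN⟩ := eventually_atTop.1 <|
    (hmean.eventually (eventually_le_nhds (lt_add_one m))).and <|
      (hcount.eventually (eventually_ge_nhds (show (c + q) / 2 < q by linarith))).and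
        (eventually_ge_atTop 1)
  refine ⟨N, fun n hn ν _ hν => ?_⟩
  obtain ⟨hA, hB, hn1⟩ := hN n hn
  exact sum_sdiff_div_sum_sdiff_rpow_le _ ν
    (fun j => mul_nonneg (hfnonneg _ (hposω j)) (Real.rpow_nonneg (hposω j).le α))
    (fun j => (hposω j).le) ht hα.le (by exact_mod_cast hn1) (by linarith) hA hB hν

/-- Uniform almost-sure boundedness of the size-biased conditional means: for i.i.d.
positive `(S_j)`, `α > 0` and measurable nonnegative `f` with `E[f(S)S^α] < ∞`,
if `c < p < 1` and `ξ_p` is a regular unique `p`-th quantile of the common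
distribution function `F` with `E[S^α·1{S ≤ ξ_p}] > 0`, then there is a finite
constant `C` such that almost surely, for all large `n` and every `ν ⊆ {1,…,n}` with
`|ν| ≤ c·n`, `(Σ_{j∈[n]∖ν} f(S_j)S_j^α)/(Σ_{j∈[n]∖ν} S_j^α) ≤ C`. -/
theorem size_biased_conditional_mean_unif_bounded
    {Ω : Type*} [MeasurableSpace Ω] (μ : Measure Ω) [IsProbabilityMeasure μ]
    (S : ℕ → Ω → ℝ) (hmeas : ∀ i, Measurable (S i))
    (hindep : iIndepFun S μ)
    (hident : ∀ i, IdentDistrib (S i) (S 1) μ μ)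
    (hpos : ∀ i, ∀ᵐ ω ∂μ, 0 < S i ω)
    (F : ℝ → ℝ) (hF : ∀ t, F t = (μ {ω | S 1 ω ≤ t}).toReal)
    (α : ℝ) (hα : 0 < α)
    (f : ℝ → ℝ) (hfmeas : Measurable f) (hfnonneg : ∀ x : ℝ, 0 < x → 0 ≤ f x)
    (hintf : Integrable (fun ω => f (S 1 ω) * S 1 ω ^ α) μ)
    (c : ℝ) (hc0 : 0 < c) (hc1 : c < 1)
    (p : ℝ) (hpc : c < p) (hp1 : p < 1)
    (ξ : ℝ) (hξ : F ξ = p) (huniq : ∀ x, F x = p → x = ξ)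
    (hreg : ∃ δ > 0, ContinuousOn F (Set.Ioo (ξ - δ) (ξ + δ)) ∧
      StrictMonoOn F (Set.Ioo (ξ - δ) (ξ + δ)))
    (hquant : 0 < ∫ ω, (if S 1 ω ≤ ξ then S 1 ω ^ α else 0) ∂μ) :
    ∃ C : ℝ, ∀ᵐ ω ∂μ, ∃ N : ℕ, ∀ n ≥ N, ∀ ν : Finset ℕ,
      ν ⊆ Finset.Icc 1 n → (ν.card : ℝ) ≤ c * n →
        (∑ j ∈ Finset.Icc 1 n \ ν, f (S j ω) * S j ω ^ α) /
            (∑ j ∈ Finset.Icc 1 n \ ν, S j ω ^ α) ≤ C :=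
  size_biased_conditional_mean_unif_bounded_general μ S hmeas hindep hident hpos α hα f hfmeas
    hfnonneg hintf c hc1
end
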